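/- arXiv:math/0608567 — 5 statements merged into one kernel-verified Lean document; each statement's English description precedes it below -/
import Mathlib

section
/- Let μ ∈ L^∞(Ω_T × (0,1)) be an entropy process solution of the IBVP, C := ‖μ‖_{L^∞(Ω_T×(0,1))}, and k ∈ ℝ. Then the semi-Kružkov entropy pairs (η_k^+, q_k^+) and (η_k^−, q_k^−) may be used in place of boundary entropy pairs: for every nonnegative φ ∈ C_0^∞(cl(Ω) × [0,T)), ∫₀^T∫_Ω∫₀¹ [η_k^±(μ)∂_tφ + q_k^±(μ)∂_xφ] dα dx dt − ∫₀^T∫_Ω∫₀¹ sign^±(μ−k) z'(x) b(μ) φ dα dx dt + ∫_Ω η_k^±(u₀(x)) φ(x,0) dx + Lip_{[-C,C]}(f) ∫₀^T [η_k^±(u_r(t)) φ(x_r,t) + η_k^±(u_l(t)) φ(x_l,t)] dt ≥ 0. -/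
open MeasureTheory Set Filter

noncomputable section

/-- Lipschitz constant of `f` on `[-C, C]`. -/
def lipOn (f : ℝ → ℝ) (C : ℝ) : ℝ :=
  sSup {L : ℝ | ∃ u ∈ Icc (-C) C, ∃ v ∈ Icc (-C) C, u ≠ v ∧ L = |f u - f v| / |u - v|}

/-- `(η, q)` is an entropy pair for `∂ₜu + ∂ₓ f(u) + z'(x) b(u) = 0`. -/
def IsEntropyPair (f η q : ℝ → ℝ) : Prop :=
  ContDiff ℝ 2 η ∧ ConvexOn ℝ univ η ∧ ContDiff ℝ 1 q ∧
    ∀ s, deriv q s = deriv η s * deriv f s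

/-- boundary entropy pair. -/
def IsBoundaryEntropyPair (f η q : ℝ → ℝ) : Prop :=
  IsEntropyPair f η q ∧ ∃ w, η w = 0 ∧ deriv η w = 0 ∧ q w = 0

/-- time partial derivative of a function on ℝ². -/
def dtFun (φ : ℝ × ℝ → ℝ) (x t : ℝ) : ℝ := fderiv ℝ φ (x, t) (0, 1)

/-- space partial derivative of a function on ℝ². -/
def dxFun (φ : ℝ × ℝ → ℝ) (x t : ℝ) : ℝ := fderiv ℝ φ (x, t) (1, 0)

/-- nonnegative test function in `C₀^∞(cl Ω × [0, T))`. -/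
def IsTestFun (T : ℝ) (φ : ℝ × ℝ → ℝ) : Prop :=
  ContDiff ℝ (⊤ : ℕ∞) φ ∧ HasCompactSupport φ ∧ (∀ p, 0 ≤ φ p) ∧
    ∀ x t, T ≤ t → φ (x, t) = 0

/-- nonnegative test function in `C₀^∞(cl Ω × (0, T))`. -/
def IsTestFun0 (T : ℝ) (φ : ℝ × ℝ → ℝ) : Prop :=
  IsTestFun T φ ∧ ∀ x t, t ≤ 0 → φ (x, t) = 0

/-- sup norm of `μ` over `Ω_T × (0,1)`. -/
def procSup (xl xr T : ℝ) (μ : ℝ → ℝ → ℝ → ℝ) : ℝ :=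
  sSup {y : ℝ | ∃ x ∈ Ioo xl xr, ∃ t ∈ Ioo 0 T, ∃ α ∈ Ioo (0:ℝ) 1, y = |μ x t α|}

/-- sup norm of `u` over `Ω_T`. -/
def solSup (xl xr T : ℝ) (u : ℝ → ℝ → ℝ) : ℝ :=
  sSup {y : ℝ | ∃ x ∈ Ioo xl xr, ∃ t ∈ Ioo 0 T, y = |u x t|}

/-- entropy process solution of the IBVP. -/
def IsEntropyProcessSol (xl xr T : ℝ) (f b z' u0 ul ur : ℝ → ℝ)
    (μ : ℝ → ℝ → ℝ → ℝ) : Prop :=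
  Measurable (fun p : ℝ × ℝ × ℝ => μ p.1 p.2.1 p.2.2) ∧
  (∃ M, ∀ x ∈ Ioo xl xr, ∀ t ∈ Ioo 0 T, ∀ α ∈ Ioo (0:ℝ) 1, |μ x t α| ≤ M) ∧
  ∀ η q, IsBoundaryEntropyPair f η q →
    ∀ φ : ℝ × ℝ → ℝ, IsTestFun T φ →
      0 ≤ (∫ t in Ioo 0 T, ∫ x in Ioo xl xr, ∫ α in Ioo (0:ℝ) 1,
              (η (μ x t α) * dtFun φ x t + q (μ x t α) * dxFun φ x t
                - deriv η (μ x t α) * z' x * b (μ x t α) * φ (x, t)))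
        + (∫ x in Ioo xl xr, η (u0 x) * φ (x, 0))
        + lipOn f (procSup xl xr T μ) *
            (∫ t in Ioo 0 T, (η (ur t) * φ (xr, t) + η (ul t) * φ (xl, t)))

/-- entropy solution of the IBVP. -/
def IsEntropySol (xl xr T : ℝ) (f b z' u0 ul ur : ℝ → ℝ)
    (u : ℝ → ℝ → ℝ) : Prop :=
  Measurable (fun p : ℝ × ℝ => u p.1 p.2) ∧
  (∃ M, ∀ x ∈ Ioo xl xr, ∀ t ∈ Ioo 0 T, |u x t| ≤ M) ∧
  ∀ η q, IsBoundaryEntropyPair f η q →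
    ∀ φ : ℝ × ℝ → ℝ, IsTestFun T φ →
      0 ≤ (∫ t in Ioo 0 T, ∫ x in Ioo xl xr,
              (η (u x t) * dtFun φ x t + q (u x t) * dxFun φ x t
                - deriv η (u x t) * z' x * b (u x t) * φ (x, t)))
        + (∫ x in Ioo xl xr, η (u0 x) * φ (x, 0))
        + lipOn f (solSup xl xr T u) *
            (∫ t in Ioo 0 T, (η (ur t) * φ (xr, t) + η (ul t) * φ (xl, t)))

/-- essential limit from the left at `a`. -/
def EssLimUp (F : ℝ → ℝ) (a L : ℝ) : Prop :=
  ∃ E : Set ℝ, volume E = 0 ∧ Tendsto F (nhdsWithin a (Iio a \ E)) (nhds L)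

/-- essential limit from the right at `a`. -/
def EssLimDown (F : ℝ → ℝ) (a L : ℝ) : Prop :=
  ∃ E : Set ℝ, volume E = 0 ∧ Tendsto F (nhdsWithin a (Ioi a \ E)) (nhds L)

def signPos (s : ℝ) : ℝ := if 0 < s then 1 else 0
def signNeg (s : ℝ) : ℝ := if s < 0 then -1 else 0

/-- Engquist-Osher numerical flux. -/
def eoFlux (f : ℝ → ℝ) (u v : ℝ) : ℝ :=
  (∫ ξ in (0:ℝ)..u, max (deriv f ξ) 0) - (∫ ξ in (0:ℝ)..v, max (-(deriv f ξ)) 0) + f 0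

/-- one explicit Euler step of the Engquist-Osher scheme. -/
def HEO (f : ℝ → ℝ) (Δx Δt u v w : ℝ) : ℝ :=
  v - Δt / Δx * (eoFlux f v w - eoFlux f u v)

/-- numerical entropy flux for the Engquist-Osher scheme. -/
def GFlux (f η q : ℝ → ℝ) (u v : ℝ) : ℝ :=
  (∫ ξ in (0:ℝ)..u, deriv η ξ * max (deriv f ξ) 0)
    - (∫ ξ in (0:ℝ)..v, deriv η ξ * max (-(deriv f ξ)) 0) + q 0

/-- density function `χ_s`. -/
def chiFun (s ξ : ℝ) : ℝ :=
  if 0 < ξ ∧ ξ < s then 1 else if s < ξ ∧ ξ < 0 then -1 else 0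

/-- integrand representation of the Engquist-Osher step. -/
def hFun (f : ℝ → ℝ) (Δx Δt u v w ξ : ℝ) : ℝ :=
  chiFun v ξ
    - Δt / Δx * (max (deriv f ξ) 0 * chiFun v ξ - max (-(deriv f ξ)) 0 * chiFun w ξ)
    + Δt / Δx * (max (deriv f ξ) 0 * chiFun u ξ + max (-(deriv f ξ)) 0 * chiFun v ξ)

/-- cell average of `z` over cell `j` (extended constantly outside `{0, …, m-1}`). -/
def zCell (z : ℝ → ℝ) (xl Δx : ℝ) (m : ℕ) (j : ℤ) : ℝ :=
  if j < 0 then Δx⁻¹ * ∫ x in xl..(xl + Δx), z x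
  else if (m : ℤ) ≤ j then Δx⁻¹ * ∫ x in (xl + ((m : ℝ) - 1) * Δx)..(xl + (m : ℝ) * Δx), z x
  else Δx⁻¹ * ∫ x in (xl + (j : ℝ) * Δx)..(xl + ((j : ℝ) + 1) * Δx), z x

/-- equilibrium reconstruction: the solution `r` of `D r + zj = D v + zc`. -/
def recon (D : ℝ → ℝ) (zc zj v : ℝ) : ℝ := Function.invFun D (D v + zc - zj)

/-- the discrete values `uⁿⱼ` of the well-balanced Engquist-Osher scheme. -/
def schemeU (f D z u0 ul ur : ℝ → ℝ) (xl Δx Δt : ℝ) (m : ℕ) : ℕ → ℤ → ℝ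
  | 0 => fun j =>
      if j < 0 then Δt⁻¹ * ∫ t in (0:ℝ)..Δt, ul t
      else if (m : ℤ) ≤ j then Δt⁻¹ * ∫ t in (0:ℝ)..Δt, ur t
      else Δx⁻¹ * ∫ x in (xl + (j : ℝ) * Δx)..(xl + ((j : ℝ) + 1) * Δx), u0 x
  | (n + 1) => fun j =>
      if j < 0 then Δt⁻¹ * ∫ t in (((n : ℝ) + 1) * Δt)..(((n : ℝ) + 2) * Δt), ul t
      else if (m : ℤ) ≤ j then Δt⁻¹ * ∫ t in (((n : ℝ) + 1) * Δt)..(((n : ℝ) + 2) * Δt), ur t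
      else
        schemeU f D z u0 ul ur xl Δx Δt m n j - Δt / Δx *
          (eoFlux f (schemeU f D z u0 ul ur xl Δx Δt m n j)
              (recon D (zCell z xl Δx m (j + 1)) (zCell z xl Δx m j)
                (schemeU f D z u0 ul ur xl Δx Δt m n (j + 1)))
           - eoFlux f
              (recon D (zCell z xl Δx m (j - 1)) (zCell z xl Δx m j)
                (schemeU f D z u0 ul ur xl Δx Δt m n (j - 1)))
              (schemeU f D z u0 ul ur xl Δx Δt m n j))

/-- the numerical solution `u_Δx` as a function on `ℝ × [0, T)`. -/
def numSol (f D z u0 ul ur : ℝ → ℝ) (xl Δx Δt : ℝ) (m : ℕ) (x t : ℝ) : ℝ :=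
  schemeU f D z u0 ul ur xl Δx Δt m (⌊t / Δt⌋.toNat) ⌊(x - xl) / Δx⌋

/-- `max{‖u₀‖_∞, ‖u_l‖_∞, ‖u_r‖_∞}`. -/
def Mconst (xl xr T : ℝ) (u0 ul ur : ℝ → ℝ) : ℝ :=
  max (sSup ((fun x => |u0 x|) '' Ioo xl xr))
    (max (sSup ((fun t => |ul t|) '' Ioo 0 T)) (sSup ((fun t => |ur t|) '' Ioo 0 T)))

/-- the a priori bound `C^Δx_T` for the well-balanced scheme. -/
def CDxT (xl xr T Δx : ℝ) (b z u0 ul ur D : ℝ → ℝ) : ℝ :=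
  Mconst xl xr T u0 ul ur *
      Real.exp (2 * T * sSup (Set.range fun s => |deriv b s|) *
        sSup ((fun x => |deriv z x|) '' Ioo xl xr))
    + Δx * (sSup ((fun x => |deriv z x|) '' Ioo xl xr) / sInf (Set.range (deriv D))) *
      Real.exp (4 * T * sSup (Set.range fun s => |deriv b s|) *
        sSup ((fun x => |deriv z x|) '' Ioo xl xr))
    + |b 0| *
      Real.exp (2 * T * (sSup (Set.range fun s => |deriv b s|) + 1) *
        sSup ((fun x => |deriv z x|) '' Ioo xl xr))


/-! ### Auxiliary lemmas for the proof -/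

section SemiKruzkovAux

open Real intervalIntegral

private lemma abs_mul_le' {a b A B : ℝ} (ha : |a| ≤ A) (hb : |b| ≤ B) :
    |a * b| ≤ A * B := by
  rw [abs_mul]
  exact mul_le_mul ha hb (abs_nonneg _) ((abs_nonneg a).trans ha)

private lemma abs_add_sub_le' {x y z X Y Z : ℝ} (hx : |x| ≤ X) (hy : |y| ≤ Y)
    (hz : |z| ≤ Z) : |x + y - z| ≤ X + Y + Z := by
  have h1 : |x + y - z| ≤ |x + y| + |z| := by
    rw [sub_eq_add_neg]
    simpa [abs_neg] using abs_add_le (x + y) (-z)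
  have h2 : |x + y| ≤ |x| + |y| := abs_add_le _ _
  linarith

private lemma expNegInvGlue_mono : Monotone expNegInvGlue := by
  intro x y h
  rcases le_or_gt x 0 with hx | hx
  · rw [expNegInvGlue.zero_of_nonpos hx]
    exact expNegInvGlue.nonneg y
  · have hy : 0 < y := lt_of_lt_of_le hx h
    unfold expNegInvGlue
    rw [if_neg (not_le.2 hx), if_neg (not_le.2 hy)]
    apply Real.exp_le_exp.2
    have : y⁻¹ ≤ x⁻¹ := inv_anti₀ hx h
    linarith

private lemma smoothTransition_mono : Monotone Real.smoothTransition := by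
  intro x y h
  rcases le_or_gt x 0 with hx | hx
  · rw [Real.smoothTransition.zero_of_nonpos hx]
    exact Real.smoothTransition.nonneg y
  · have e1 : expNegInvGlue x ≤ expNegInvGlue y := expNegInvGlue_mono h
    have e2 : expNegInvGlue (1 - y) ≤ expNegInvGlue (1 - x) := expNegInvGlue_mono (by linarith)
    have e3 : 0 < expNegInvGlue x := expNegInvGlue.pos_of_pos hx
    have e4 : 0 ≤ expNegInvGlue (1 - y) := expNegInvGlue.nonneg _
    have e5 : 0 ≤ expNegInvGlue y := expNegInvGlue.nonneg _
    have d1 := Real.smoothTransition.pos_denom x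
    have d2 := Real.smoothTransition.pos_denom y
    unfold Real.smoothTransition
    rw [div_le_div_iff₀ d1 d2]
    nlinarith

/-- Construction of a boundary entropy pair from a monotone `C¹` function `w`
vanishing at `k`. -/
private lemma pair_aux (f : ℝ → ℝ) (hf : ContDiff ℝ 2 f) (k : ℝ) (w : ℝ → ℝ)
    (hw : ContDiff ℝ 1 w) (hmono : Monotone w) (hwk : w k = 0) :
    IsBoundaryEntropyPair f (fun s => ∫ ξ in k..s, w ξ)
      (fun s => ∫ ξ in k..s, w ξ * deriv f ξ) ∧
    (∀ s, deriv (fun u => ∫ ξ in k..u, w ξ) s = w s) := by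
  have hwc : Continuous w := hw.continuous
  have hfd : Continuous (deriv f) := hf.continuous_deriv (by norm_num)
  have hqc : Continuous fun ξ => w ξ * deriv f ξ := hwc.mul hfd
  have hηderiv : ∀ s, deriv (fun u => ∫ ξ in k..u, w ξ) s = w s := fun s =>
    Continuous.deriv_integral w hwc k s
  have hηdiff : Differentiable ℝ (fun u => ∫ ξ in k..u, w ξ) := fun s =>
    (hwc.integral_hasStrictDerivAt k s).hasDerivAt.differentiableAt
  have hqderiv : ∀ s, deriv (fun u => ∫ ξ in k..u, w ξ * deriv f ξ) s
      = w s * deriv f s := fun s =>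
    Continuous.deriv_integral _ hqc k s
  have hqdiff : Differentiable ℝ (fun u => ∫ ξ in k..u, w ξ * deriv f ξ) := fun s =>
    (hqc.integral_hasStrictDerivAt k s).hasDerivAt.differentiableAt
  refine ⟨⟨⟨?_, ?_, ?_, ?_⟩, k, ?_, ?_, ?_⟩, hηderiv⟩
  · rw [show (2 : WithTop ℕ∞) = 1 + 1 from rfl]
    refine contDiff_succ_iff_deriv.2 ⟨hηdiff, ?_, ?_⟩
    · intro h; simp at h
    · rw [funext hηderiv]; exact hw
  · refine Monotone.convexOn_univ_of_deriv hηdiff ?_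
    rw [show deriv (fun u => ∫ ξ in k..u, w ξ) = w from funext hηderiv]
    exact hmono
  · exact contDiff_one_iff_deriv.2 ⟨hqdiff, by rw [funext hqderiv]; exact hqc⟩
  · intro s; rw [hqderiv s, hηderiv s]
  · exact intervalIntegral.integral_same
  · rw [hηderiv k, hwk]
  · exact intervalIntegral.integral_same

/-- Dominated convergence for interval integrals, `a ≤ b` case. -/
private lemma tendsto_int_aux {a b : ℝ} (hab : a ≤ b) (C : ℝ) (g : ℕ → ℝ → ℝ)
    (G : ℝ → ℝ) (hg : ∀ n, Continuous (g n))
    (hbd : ∀ n, ∀ ξ ∈ Set.uIcc a b, |g n ξ| ≤ C)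
    (hlim : ∀ ξ ∈ Ioo a b, Tendsto (fun n => g n ξ) atTop (nhds (G ξ))) :
    Tendsto (fun n => ∫ ξ in a..b, g n ξ) atTop (nhds (∫ ξ in a..b, G ξ)) := by
  simp only [intervalIntegral.integral_of_le hab]
  have hfin : volume (Ioc a b) < ⊤ := by
    rw [Real.volume_Ioc]; exact ENNReal.ofReal_lt_top
  refine tendsto_integral_of_dominated_convergence (fun _ => C)
    (fun n => (hg n).aestronglyMeasurable.restrict)
    (integrableOn_const hfin.ne) (fun n => ?_) ?_
  · refine (ae_restrict_iff' measurableSet_Ioc).2 (Eventually.of_forall fun ξ hξ => ?_)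
    have : ξ ∈ Set.uIcc a b := by
      rw [Set.uIcc_of_le hab]
      exact ⟨hξ.1.le, hξ.2⟩
    simpa only [Real.norm_eq_abs] using hbd n ξ this
  · have h1 : ∀ᵐ ξ ∂volume.restrict (Ioc a b), ξ ∈ Ioc a b :=
      ae_restrict_mem measurableSet_Ioc
    have h2 : ∀ᵐ ξ ∂volume.restrict (Ioc a b), ξ ≠ b := by
      refine ae_restrict_of_ae ?_
      have hs : {ξ : ℝ | ¬ ξ ≠ b} = {b} := by ext ξ; simp
      rw [ae_iff, hs]
      exact measure_singleton b
    filter_upwards [h1, h2] with ξ hmem hne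
    exact hlim ξ ⟨hmem.1, hmem.2.lt_of_ne hne⟩

/-- Dominated convergence for interval integrals, general endpoints. -/
private lemma tendsto_int (a b : ℝ) (C : ℝ) (g : ℕ → ℝ → ℝ)
    (G : ℝ → ℝ) (hg : ∀ n, Continuous (g n))
    (hbd : ∀ n, ∀ ξ ∈ Set.uIcc a b, |g n ξ| ≤ C)
    (hlim : ∀ ξ ∈ Ioo (min a b) (max a b), Tendsto (fun n => g n ξ) atTop (nhds (G ξ))) :
    Tendsto (fun n => ∫ ξ in a..b, g n ξ) atTop (nhds (∫ ξ in a..b, G ξ)) := by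
  rcases le_total a b with hab | hab
  · refine tendsto_int_aux hab C g G hg hbd fun ξ hξ => ?_
    rw [min_eq_left hab, max_eq_right hab] at hlim
    exact hlim ξ hξ
  · have h := tendsto_int_aux hab C g G hg
      (fun n ξ hξ => hbd n ξ (by rwa [Set.uIcc_comm]))
      (fun ξ hξ => by
        rw [min_eq_right hab, max_eq_left hab] at hlim
        exact hlim ξ hξ)
    have h2 := h.neg
    simp only [← intervalIntegral.integral_symm] at h2
    exact h2

private lemma integrableOn_of_bdd {δ : Type*} [MeasureSpace δ] {P : Set δ}
    (hP : MeasurableSet P) (hfin : volume P < ⊤) {F : δ → ℝ}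
    (hm : AEStronglyMeasurable F (volume.restrict P))
    {K : ℝ} (hK : ∀ p ∈ P, |F p| ≤ K) : IntegrableOn F P := by
  refine Integrable.mono'
    (show Integrable (fun _ => K) (volume.restrict P) from integrableOn_const hfin.ne)
    hm ?_
  exact (ae_restrict_iff' hP).2 (Eventually.of_forall fun p hp => by
    simpa only [Real.norm_eq_abs] using hK p hp)

/-- A triple iterated integral over finite-measure sets equals the integral over the
product set. -/
private lemma iter3_eq {S1 S2 S3 : Set ℝ} {H : ℝ → ℝ → ℝ → ℝ}
    (hint : IntegrableOn (fun p : ℝ × ℝ × ℝ => H p.1 p.2.1 p.2.2) (S1 ×ˢ S2 ×ˢ S3)) :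
    ∫ t in S1, ∫ x in S2, ∫ α in S3, H t x α
      = ∫ p in S1 ×ˢ S2 ×ˢ S3, H p.1 p.2.1 p.2.2 := by
  have hP : (volume : Measure (ℝ × ℝ × ℝ)).restrict (S1 ×ˢ S2 ×ˢ S3)
      = (volume.restrict S1).prod ((volume.restrict S2).prod (volume.restrict S3)) := by
    rw [Measure.prod_restrict, Measure.prod_restrict]
    rfl
  have hint2 : Integrable (Function.uncurry fun t (q : ℝ × ℝ) => H t q.1 q.2)
      ((volume.restrict S1).prod ((volume.restrict S2).prod (volume.restrict S3))) := by
    rw [← hP]; exact hint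
  calc ∫ t in S1, ∫ x in S2, ∫ α in S3, H t x α
      = ∫ t in S1, ∫ q, H t q.1 q.2
          ∂((volume.restrict S2).prod (volume.restrict S3)) := by
        refine integral_congr_ae ?_
        have hae := Integrable.prod_right_ae (μ := volume.restrict S1)
          (ν := (volume.restrict S2).prod (volume.restrict S3)) hint2
        filter_upwards [hae] with t ht
        exact MeasureTheory.integral_integral (f := fun x α => H t x α)
          (μ := volume.restrict S2) (ν := volume.restrict S3) ht
    _ = ∫ p, H p.1 p.2.1 p.2.2
          ∂((volume.restrict S1).prod ((volume.restrict S2).prod (volume.restrict S3))) :=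
        MeasureTheory.integral_integral hint2
    _ = ∫ p in S1 ×ˢ S2 ×ˢ S3, H p.1 p.2.1 p.2.2 := by rw [hP]

end SemiKruzkovAux


section SemiKruzkovKey

/-- Key limit lemma: the entropy process inequality passes to pointwise limits of
boundary entropy pairs. -/
private lemma key_limit
    (xl xr T : ℝ) (f b z' u0 ul ur : ℝ → ℝ) (μ : ℝ → ℝ → ℝ → ℝ)
    (hμ : IsEntropyProcessSol xl xr T f b z' u0 ul ur μ)
    (hbc : Continuous b)
    (hz'm : Measurable z') (hz'b : ∃ K, ∀ x, |z' x| ≤ K)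
    (hu0m : Measurable u0) (hu0b : ∃ M, ∀ x, |u0 x| ≤ M)
    (hulm : Measurable ul) (hulb : ∃ M, ∀ t, |ul t| ≤ M)
    (hurm : Measurable ur) (hurb : ∃ M, ∀ t, |ur t| ≤ M)
    (φ : ℝ × ℝ → ℝ) (hφ : IsTestFun T φ)
    (ηn qn : ℕ → ℝ → ℝ) (hpair : ∀ n, IsBoundaryEntropyPair f (ηn n) (qn n))
    (η' q' σ : ℝ → ℝ) (hη'm : Measurable η') (hq'm : Measurable q') (hσm : Measurable σ)
    (hcη : ∀ s, Tendsto (fun n => ηn n s) atTop (nhds (η' s)))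
    (hcq : ∀ s, Tendsto (fun n => qn n s) atTop (nhds (q' s)))
    (hcσ : ∀ s, Tendsto (fun n => deriv (ηn n) s) atTop (nhds (σ s)))
    (hbd : ∀ R : ℝ, 0 ≤ R → ∃ K, 0 ≤ K ∧ ∀ n s, |s| ≤ R →
      |ηn n s| ≤ K ∧ |qn n s| ≤ K ∧ |deriv (ηn n) s| ≤ K) :
    0 ≤ (∫ t in Ioo 0 T, ∫ x in Ioo xl xr, ∫ α in Ioo (0:ℝ) 1,
            (η' (μ x t α) * dtFun φ x t + q' (μ x t α) * dxFun φ x t))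
        - (∫ t in Ioo 0 T, ∫ x in Ioo xl xr, ∫ α in Ioo (0:ℝ) 1,
            σ (μ x t α) * z' x * b (μ x t α) * φ (x, t))
        + (∫ x in Ioo xl xr, η' (u0 x) * φ (x, 0))
        + lipOn f (procSup xl xr T μ) *
            (∫ t in Ioo 0 T, (η' (ur t) * φ (xr, t) + η' (ul t) * φ (xl, t))) := by
  classical
  obtain ⟨hμm, ⟨M0, hM0⟩, hμineq⟩ := hμ
  obtain ⟨Mu0, hMu0⟩ := hu0b
  obtain ⟨Mul, hMul⟩ := hulb
  obtain ⟨Mur, hMur⟩ := hurb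
  obtain ⟨Kz, hKz⟩ := hz'b
  set R : ℝ := max (max (max M0 0) Mu0) (max Mul Mur) with hRdef
  have hR0 : (0:ℝ) ≤ R := le_trans (le_max_right M0 0) (le_trans (le_max_left _ _) (le_max_left _ _))
  have hRM : max M0 0 ≤ R := le_trans (le_max_left _ _) (le_max_left _ _)
  have hRu0 : Mu0 ≤ R := le_trans (le_max_right _ _) (le_max_left _ _)
  have hRul : Mul ≤ R := le_trans (le_max_left _ _) (le_max_right _ _)
  have hRur : Mur ≤ R := le_trans (le_max_right _ _) (le_max_right _ _)
  obtain ⟨K, hK0, hK⟩ := hbd R hR0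
  -- bounds for test function and its derivative
  obtain ⟨Cφ, hCφ⟩ := hφ.2.1.exists_bound_of_continuous hφ.1.continuous
  have hCφ0 : 0 ≤ Cφ := le_trans (norm_nonneg _) (hCφ (0, 0))
  have hfderiv_cont : Continuous (fderiv ℝ φ) := hφ.1.continuous_fderiv (by simp)
  obtain ⟨Cd, hCd⟩ := (hφ.2.1.fderiv ℝ).exists_bound_of_continuous hfderiv_cont
  have hCd0 : 0 ≤ Cd := le_trans (norm_nonneg _) (hCd (0, 0))
  have hnorm01 : ‖((0:ℝ), (1:ℝ))‖ ≤ 1 := by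
    rw [Prod.norm_def]; simp
  have hnorm10 : ‖((1:ℝ), (0:ℝ))‖ ≤ 1 := by
    rw [Prod.norm_def]; simp
  have hdt : ∀ x t, |dtFun φ x t| ≤ Cd := by
    intro x t
    have h1 : ‖fderiv ℝ φ (x, t) ((0:ℝ), (1:ℝ))‖ ≤ ‖fderiv ℝ φ (x, t)‖ * ‖((0:ℝ), (1:ℝ))‖ :=
      (fderiv ℝ φ (x, t)).le_opNorm _
    have h2 : ‖fderiv ℝ φ (x, t)‖ * ‖((0:ℝ), (1:ℝ))‖ ≤ Cd * 1 :=
      mul_le_mul (hCd _) hnorm01 (norm_nonneg _) hCd0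
    simpa [dtFun, Real.norm_eq_abs] using h1.trans (by linarith)
  have hdx : ∀ x t, |dxFun φ x t| ≤ Cd := by
    intro x t
    have h1 : ‖fderiv ℝ φ (x, t) ((1:ℝ), (0:ℝ))‖ ≤ ‖fderiv ℝ φ (x, t)‖ * ‖((1:ℝ), (0:ℝ))‖ :=
      (fderiv ℝ φ (x, t)).le_opNorm _
    have h2 : ‖fderiv ℝ φ (x, t)‖ * ‖((1:ℝ), (0:ℝ))‖ ≤ Cd * 1 :=
      mul_le_mul (hCd _) hnorm10 (norm_nonneg _) hCd0
    simpa [dxFun, Real.norm_eq_abs] using h1.trans (by linarith)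
  have hKz0 : 0 ≤ Kz := le_trans (abs_nonneg _) (hKz 0)
  obtain ⟨Kb, hKb⟩ := (isCompact_Icc (a := -R) (b := R)).exists_bound_of_continuousOn
    hbc.continuousOn
  have hKb0 : 0 ≤ Kb := le_trans (norm_nonneg _) (hKb 0 ⟨by linarith, hR0⟩)
  have hKbabs : ∀ s : ℝ, |s| ≤ R → |b s| ≤ Kb := by
    intro s hs
    have := hKb s (abs_le.1 hs)
    simpa only [Real.norm_eq_abs] using this
  -- the product set
  set S1 : Set ℝ := Ioo 0 T with hS1def
  set S2 : Set ℝ := Ioo xl xr with hS2def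
  set S3 : Set ℝ := Ioo (0:ℝ) 1 with hS3def
  set P : Set (ℝ × ℝ × ℝ) := S1 ×ˢ S2 ×ˢ S3 with hPdef
  have hPm : MeasurableSet P :=
    measurableSet_Ioo.prod (measurableSet_Ioo.prod measurableSet_Ioo)
  have volP : volume P < ⊤ := by
    rw [hPdef, hS1def, hS2def, hS3def, Measure.volume_eq_prod, Measure.prod_prod,
      Measure.volume_eq_prod, Measure.prod_prod]
    simp only [Real.volume_Ioo]
    exact ENNReal.mul_lt_top ENNReal.ofReal_lt_top
      (ENNReal.mul_lt_top ENNReal.ofReal_lt_top ENNReal.ofReal_lt_top)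
  -- the process as a function on the product space
  set μ' : ℝ × ℝ × ℝ → ℝ := fun p => μ p.2.1 p.1 p.2.2 with hμ'def
  have hμ'm : Measurable μ' := by
    have hswap : Measurable fun p : ℝ × ℝ × ℝ => (p.2.1, p.1, p.2.2) :=
      (measurable_fst.comp measurable_snd).prodMk
        (measurable_fst.prodMk (measurable_snd.comp measurable_snd))
    exact hμm.comp hswap
  have hμ'bd : ∀ p ∈ P, |μ' p| ≤ R := by
    intro p hp
    refine le_trans (le_trans (hM0 p.2.1 hp.2.1 p.1 hp.1 p.2.2 hp.2.2) (le_max_left M0 0)) hRM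
  -- continuity facts
  have hφc : Continuous φ := hφ.1.continuous
  have hdtc : Continuous (fun p : ℝ × ℝ × ℝ => dtFun φ p.2.1 p.1) := by
    have h1 : Continuous fun p : ℝ × ℝ × ℝ => fderiv ℝ φ (p.2.1, p.1) :=
      hfderiv_cont.comp ((continuous_fst.comp continuous_snd).prodMk continuous_fst)
    exact h1.clm_apply continuous_const
  have hdxc : Continuous (fun p : ℝ × ℝ × ℝ => dxFun φ p.2.1 p.1) := by
    have h1 : Continuous fun p : ℝ × ℝ × ℝ => fderiv ℝ φ (p.2.1, p.1) :=
      hfderiv_cont.comp ((continuous_fst.comp continuous_snd).prodMk continuous_fst)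
    exact h1.clm_apply continuous_const
  have hφpc : Continuous (fun p : ℝ × ℝ × ℝ => φ (p.2.1, p.1)) :=
    hφc.comp ((continuous_fst.comp continuous_snd).prodMk continuous_fst)
  have hz'pm : Measurable (fun p : ℝ × ℝ × ℝ => z' p.2.1) :=
    hz'm.comp (measurable_fst.comp measurable_snd)
  -- integrands
  set HN : ℕ → ℝ × ℝ × ℝ → ℝ := fun n p =>
    ηn n (μ' p) * dtFun φ p.2.1 p.1 + qn n (μ' p) * dxFun φ p.2.1 p.1
      - deriv (ηn n) (μ' p) * z' p.2.1 * b (μ' p) * φ (p.2.1, p.1) with hHNdef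
  set G1 : ℝ × ℝ × ℝ → ℝ := fun p =>
    η' (μ' p) * dtFun φ p.2.1 p.1 + q' (μ' p) * dxFun φ p.2.1 p.1 with hG1def
  set G2 : ℝ × ℝ × ℝ → ℝ := fun p =>
    σ (μ' p) * z' p.2.1 * b (μ' p) * φ (p.2.1, p.1) with hG2def
  have hηc : ∀ n, Continuous (ηn n) := fun n => (hpair n).1.1.continuous
  have hqc : ∀ n, Continuous (qn n) := fun n => (hpair n).1.2.2.1.continuous
  have hdηc : ∀ n, Continuous (deriv (ηn n)) := fun n =>
    (hpair n).1.1.continuous_deriv (by norm_num)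
  have hHNm : ∀ n, Measurable (HN n) := by
    intro n
    exact ((((hηc n).measurable.comp hμ'm).mul hdtc.measurable).add
      (((hqc n).measurable.comp hμ'm).mul hdxc.measurable)).sub
      (((((hdηc n).measurable.comp hμ'm).mul hz'pm).mul
        (hbc.measurable.comp hμ'm)).mul hφpc.measurable)
  have hG1m : Measurable G1 :=
    ((hη'm.comp hμ'm).mul hdtc.measurable).add ((hq'm.comp hμ'm).mul hdxc.measurable)
  have hG2m : Measurable G2 :=
    (((hσm.comp hμ'm).mul hz'pm).mul (hbc.measurable.comp hμ'm)).mul hφpc.measurable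
  -- uniform bound
  set KH : ℝ := K * Cd + K * Cd + K * Kz * Kb * Cφ with hKHdef
  have hHNbd : ∀ n, ∀ p ∈ P, |HN n p| ≤ KH := by
    intro n p hp
    obtain ⟨h1, h2, h3⟩ := hK n (μ' p) (hμ'bd p hp)
    have hb1 : |b (μ' p)| ≤ Kb := hKbabs _ (hμ'bd p hp)
    refine abs_add_sub_le' (abs_mul_le' h1 (hdt _ _)) (abs_mul_le' h2 (hdx _ _)) ?_
    exact abs_mul_le' (abs_mul_le' (abs_mul_le' h3 (hKz _)) hb1)
      (by simpa only [Real.norm_eq_abs] using hCφ (p.2.1, p.1))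
  -- bounds for the limit functions
  have hη'bd : ∀ s : ℝ, |s| ≤ R → |η' s| ≤ K := fun s hs =>
    le_of_tendsto (hcη s).abs (Eventually.of_forall fun n => (hK n s hs).1)
  have hq'bd : ∀ s : ℝ, |s| ≤ R → |q' s| ≤ K := fun s hs =>
    le_of_tendsto (hcq s).abs (Eventually.of_forall fun n => (hK n s hs).2.1)
  have hσbd : ∀ s : ℝ, |s| ≤ R → |σ s| ≤ K := fun s hs =>
    le_of_tendsto (hcσ s).abs (Eventually.of_forall fun n => (hK n s hs).2.2)
  have hG1bd : ∀ p ∈ P, |G1 p| ≤ K * Cd + K * Cd := by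
    intro p hp
    refine le_trans (abs_add_le _ _) ?_
    exact add_le_add (abs_mul_le' (hη'bd _ (hμ'bd p hp)) (hdt _ _))
      (abs_mul_le' (hq'bd _ (hμ'bd p hp)) (hdx _ _))
  have hG2bd : ∀ p ∈ P, |G2 p| ≤ K * Kz * Kb * Cφ := by
    intro p hp
    exact abs_mul_le' (abs_mul_le' (abs_mul_le' (hσbd _ (hμ'bd p hp)) (hKz _))
      (hKbabs _ (hμ'bd p hp))) (by simpa only [Real.norm_eq_abs] using hCφ (p.2.1, p.1))
  -- integrability
  have hHNint : ∀ n, IntegrableOn (HN n) P :=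
    fun n => integrableOn_of_bdd hPm volP (hHNm n).aestronglyMeasurable (hHNbd n)
  have hG1int : IntegrableOn G1 P :=
    integrableOn_of_bdd hPm volP hG1m.aestronglyMeasurable hG1bd
  have hG2int : IntegrableOn G2 P :=
    integrableOn_of_bdd hPm volP hG2m.aestronglyMeasurable hG2bd
  -- the triple integral term
  have hiter : ∀ n, (∫ t in S1, ∫ x in S2, ∫ α in S3,
      (ηn n (μ x t α) * dtFun φ x t + qn n (μ x t α) * dxFun φ x t
        - deriv (ηn n) (μ x t α) * z' x * b (μ x t α) * φ (x, t)))
      = ∫ p in P, HN n p := fun n => iter3_eq (hHNint n)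
  have hDCT : Tendsto (fun n => ∫ p in P, HN n p) atTop
      (nhds (∫ p in P, (G1 p - G2 p))) := by
    refine tendsto_integral_of_dominated_convergence (fun _ => KH)
      (fun n => (hHNm n).aestronglyMeasurable.restrict)
      (integrableOn_const volP.ne) (fun n => ?_) ?_
    · exact (ae_restrict_iff' hPm).2 (Eventually.of_forall fun p hp => by
        simpa only [Real.norm_eq_abs] using hHNbd n p hp)
    · refine Eventually.of_forall fun p => ?_
      exact (((hcη (μ' p)).mul_const _).add ((hcq (μ' p)).mul_const _)).sub
        ((((hcσ (μ' p)).mul_const _).mul_const _).mul_const _)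
  have hsplit : ∫ p in P, (G1 p - G2 p) = (∫ p in P, G1 p) - ∫ p in P, G2 p :=
    integral_sub hG1int hG2int
  have hAiter : (∫ t in S1, ∫ x in S2, ∫ α in S3,
      (η' (μ x t α) * dtFun φ x t + q' (μ x t α) * dxFun φ x t)) = ∫ p in P, G1 p :=
    iter3_eq hG1int
  have hBiter : (∫ t in S1, ∫ x in S2, ∫ α in S3,
      σ (μ x t α) * z' x * b (μ x t α) * φ (x, t)) = ∫ p in P, G2 p :=
    iter3_eq hG2int
  have hTtend : Tendsto (fun n => ∫ t in S1, ∫ x in S2, ∫ α in S3,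
      (ηn n (μ x t α) * dtFun φ x t + qn n (μ x t α) * dxFun φ x t
        - deriv (ηn n) (μ x t α) * z' x * b (μ x t α) * φ (x, t))) atTop
      (nhds ((∫ t in S1, ∫ x in S2, ∫ α in S3,
          (η' (μ x t α) * dtFun φ x t + q' (μ x t α) * dxFun φ x t))
        - ∫ t in S1, ∫ x in S2, ∫ α in S3,
            σ (μ x t α) * z' x * b (μ x t α) * φ (x, t))) := by
    rw [hAiter, hBiter, ← hsplit]
    exact hDCT.congr fun n => (hiter n).symm
  -- the initial-datum term
  have volS2 : volume S2 < ⊤ := by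
    rw [hS2def, Real.volume_Ioo]; exact ENNReal.ofReal_lt_top
  have volS1 : volume S1 < ⊤ := by
    rw [hS1def, Real.volume_Ioo]; exact ENNReal.ofReal_lt_top
  have hφ0c : Continuous fun x : ℝ => φ (x, 0) :=
    hφc.comp (continuous_id.prodMk continuous_const)
  have hu0R : ∀ x, |u0 x| ≤ R := fun x => (hMu0 x).trans hRu0
  have hCtend : Tendsto (fun n => ∫ x in S2, ηn n (u0 x) * φ (x, 0)) atTop
      (nhds (∫ x in S2, η' (u0 x) * φ (x, 0))) := by
    refine tendsto_integral_of_dominated_convergence (fun _ => K * Cφ)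
      (fun n => (((hηc n).measurable.comp hu0m).mul hφ0c.measurable).aestronglyMeasurable.restrict)
      (integrableOn_const volS2.ne) (fun n => Eventually.of_forall fun x => ?_)
      (Eventually.of_forall fun x => (hcη (u0 x)).mul_const _)
    simpa only [Real.norm_eq_abs] using abs_mul_le' (hK n (u0 x) (hu0R x)).1
      (by simpa only [Real.norm_eq_abs] using hCφ (x, 0))
  -- the boundary term
  have hφrc : Continuous fun t : ℝ => φ (xr, t) :=
    hφc.comp (continuous_const.prodMk continuous_id)
  have hφlc : Continuous fun t : ℝ => φ (xl, t) :=
    hφc.comp (continuous_const.prodMk continuous_id)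
  have hulR : ∀ t, |ul t| ≤ R := fun t => (hMul t).trans hRul
  have hurR : ∀ t, |ur t| ≤ R := fun t => (hMur t).trans hRur
  have hDtend : Tendsto (fun n => ∫ t in S1,
      (ηn n (ur t) * φ (xr, t) + ηn n (ul t) * φ (xl, t))) atTop
      (nhds (∫ t in S1, (η' (ur t) * φ (xr, t) + η' (ul t) * φ (xl, t)))) := by
    refine tendsto_integral_of_dominated_convergence (fun _ => K * Cφ + K * Cφ)
      (fun n => ((((hηc n).measurable.comp hurm).mul hφrc.measurable).add
        (((hηc n).measurable.comp hulm).mul hφlc.measurable)).aestronglyMeasurable.restrict)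
      (integrableOn_const volS1.ne) (fun n => Eventually.of_forall fun t => ?_)
      (Eventually.of_forall fun t =>
        ((hcη (ur t)).mul_const _).add ((hcη (ul t)).mul_const _))
    have b1 := abs_mul_le' (hK n (ur t) (hurR t)).1
      (by simpa only [Real.norm_eq_abs] using hCφ (xr, t))
    have b2 := abs_mul_le' (hK n (ul t) (hulR t)).1
      (by simpa only [Real.norm_eq_abs] using hCφ (xl, t))
    have := (abs_add_le _ _).trans (add_le_add b1 b2)
    simpa only [Real.norm_eq_abs] using this
  have htend := (hTtend.add hCtend).add
    (hDtend.const_mul (lipOn f (procSup xl xr T μ)))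
  exact ge_of_tendsto' htend fun n => hμineq (ηn n) (qn n) (hpair n) φ hφ

end SemiKruzkovKey


section SemiKruzkovFamilies

private lemma measurable_signPos : Measurable signPos := by
  unfold signPos
  exact Measurable.ite measurableSet_Ioi measurable_const measurable_const

private lemma measurable_signNeg : Measurable signNeg := by
  unfold signNeg
  exact Measurable.ite measurableSet_Iio measurable_const measurable_const

/-- smooth increasing approximation of `signPos (· - k)`. -/
private def wP (k : ℝ) (n : ℕ) (ξ : ℝ) : ℝ :=
  Real.smoothTransition (((n : ℝ) + 1) * (ξ - k))

/-- smooth increasing approximation of `signNeg (· - k)`. -/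
private def wM (k : ℝ) (n : ℕ) (ξ : ℝ) : ℝ :=
  -Real.smoothTransition (((n : ℝ) + 1) * (k - ξ))

private lemma smoothTransition_contDiff_one : ContDiff ℝ 1 Real.smoothTransition :=
  Real.smoothTransition.contDiff (n := 1)

private lemma wP_contDiff (k : ℝ) (n : ℕ) : ContDiff ℝ 1 (wP k n) :=
  smoothTransition_contDiff_one.comp (contDiff_const.mul (contDiff_id.sub contDiff_const))

private lemma wM_contDiff (k : ℝ) (n : ℕ) : ContDiff ℝ 1 (wM k n) :=
  (smoothTransition_contDiff_one.comp
    (contDiff_const.mul (contDiff_const.sub contDiff_id))).neg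

private lemma wP_cont (k : ℝ) (n : ℕ) : Continuous (wP k n) :=
  (wP_contDiff k n).continuous

private lemma wM_cont (k : ℝ) (n : ℕ) : Continuous (wM k n) :=
  (wM_contDiff k n).continuous

private lemma wP_mono (k : ℝ) (n : ℕ) : Monotone (wP k n) := fun x y h =>
  smoothTransition_mono (mul_le_mul_of_nonneg_left (by linarith) (by positivity))

private lemma wM_mono (k : ℝ) (n : ℕ) : Monotone (wM k n) := fun x y h =>
  neg_le_neg (smoothTransition_mono (mul_le_mul_of_nonneg_left (by linarith) (by positivity)))

private lemma wP_k (k : ℝ) (n : ℕ) : wP k n k = 0 := by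
  simp [wP]

private lemma wM_k (k : ℝ) (n : ℕ) : wM k n k = 0 := by
  simp [wM]

private lemma wP_abs (k : ℝ) (n : ℕ) (ξ : ℝ) : |wP k n ξ| ≤ 1 := by
  rw [abs_le, wP]
  exact ⟨by linarith [Real.smoothTransition.nonneg (((n : ℝ) + 1) * (ξ - k))],
    Real.smoothTransition.le_one _⟩

private lemma wM_abs (k : ℝ) (n : ℕ) (ξ : ℝ) : |wM k n ξ| ≤ 1 := by
  rw [abs_le, wM]
  constructor
  · exact neg_le_neg (Real.smoothTransition.le_one (((n : ℝ) + 1) * (k - ξ)))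
  · have := Real.smoothTransition.nonneg (((n : ℝ) + 1) * (k - ξ))
    linarith

private lemma wP_zero_of_le (k : ℝ) (n : ℕ) {ξ : ℝ} (h : ξ ≤ k) : wP k n ξ = 0 :=
  Real.smoothTransition.zero_of_nonpos
    (mul_nonpos_of_nonneg_of_nonpos (by positivity) (by linarith))

private lemma wM_zero_of_ge (k : ℝ) (n : ℕ) {ξ : ℝ} (h : k ≤ ξ) : wM k n ξ = 0 := by
  rw [wM, Real.smoothTransition.zero_of_nonpos
    (mul_nonpos_of_nonneg_of_nonpos (by positivity) (by linarith)), neg_zero]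

private lemma wP_event_one (k : ℝ) {ξ : ℝ} (h : k < ξ) :
    ∀ᶠ n in atTop, wP k n ξ = 1 := by
  obtain ⟨N, hN⟩ := exists_nat_ge (1 / (ξ - k))
  filter_upwards [eventually_ge_atTop N] with n hn
  apply Real.smoothTransition.one_of_one_le
  have h1 : 0 < ξ - k := sub_pos.2 h
  have h2 : (1 : ℝ) / (ξ - k) ≤ (n : ℝ) := le_trans hN (Nat.cast_le.2 hn)
  rw [div_le_iff₀ h1] at h2
  nlinarith

private lemma wM_event_neg_one (k : ℝ) {ξ : ℝ} (h : ξ < k) :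
    ∀ᶠ n in atTop, wM k n ξ = -1 := by
  obtain ⟨N, hN⟩ := exists_nat_ge (1 / (k - ξ))
  filter_upwards [eventually_ge_atTop N] with n hn
  rw [wM, Real.smoothTransition.one_of_one_le]
  have h1 : 0 < k - ξ := sub_pos.2 h
  have h2 : (1 : ℝ) / (k - ξ) ≤ (n : ℝ) := le_trans hN (Nat.cast_le.2 hn)
  rw [div_le_iff₀ h1] at h2
  nlinarith

private lemma wP_tendsto (k s : ℝ) :
    Tendsto (fun n => wP k n s) atTop (nhds (signPos (s - k))) := by
  rcases lt_or_ge k s with h | h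
  · rw [show signPos (s - k) = 1 from if_pos (by linarith)]
    exact tendsto_const_nhds.congr' ((wP_event_one k h).mono fun n hn => hn.symm)
  · rw [show signPos (s - k) = 0 from if_neg (not_lt.2 (by linarith))]
    simpa [wP_zero_of_le k _ h] using (tendsto_const_nhds :
      Tendsto (fun _ : ℕ => (0:ℝ)) atTop (nhds 0))

private lemma wM_tendsto (k s : ℝ) :
    Tendsto (fun n => wM k n s) atTop (nhds (signNeg (s - k))) := by
  rcases lt_or_ge s k with h | h
  · rw [show signNeg (s - k) = -1 from if_pos (by linarith)]
    exact tendsto_const_nhds.congr' ((wM_event_neg_one k h).mono fun n hn => hn.symm)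
  · rw [show signNeg (s - k) = 0 from if_neg (not_lt.2 (by linarith))]
    simpa [wM_zero_of_ge k _ h] using (tendsto_const_nhds :
      Tendsto (fun _ : ℕ => (0:ℝ)) atTop (nhds 0))

private lemma etaP_tendsto (k s : ℝ) :
    Tendsto (fun n => ∫ ξ in k..s, wP k n ξ) atTop (nhds (max (s - k) 0)) := by
  rcases lt_or_ge k s with hks | hks
  · have hval : (∫ _ξ in k..s, (1:ℝ)) = s - k := by simp
    rw [max_eq_left (by linarith : (0:ℝ) ≤ s - k), ← hval]
    refine tendsto_int k s 1 _ (fun _ => 1) (wP_cont k) (fun n ξ _ => wP_abs k n ξ) ?_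
    intro ξ hξ
    rw [min_eq_left hks.le, max_eq_right hks.le] at hξ
    exact tendsto_const_nhds.congr' ((wP_event_one k hξ.1).mono fun n hn => hn.symm)
  · have h0 : ∀ n, (∫ ξ in k..s, wP k n ξ) = 0 := by
      intro n
      have hEq : Set.EqOn (fun ξ => wP k n ξ) (fun _ => (0:ℝ)) (Set.uIcc k s) := by
        intro ξ hξ
        rw [Set.uIcc_of_ge hks] at hξ
        exact wP_zero_of_le k n hξ.2
      rw [intervalIntegral.integral_congr hEq]
      simp
    rw [max_eq_right (by linarith : s - k ≤ (0:ℝ))]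
    simpa [h0] using (tendsto_const_nhds :
      Tendsto (fun _ : ℕ => (0:ℝ)) atTop (nhds 0))

private lemma etaM_tendsto (k s : ℝ) :
    Tendsto (fun n => ∫ ξ in k..s, wM k n ξ) atTop (nhds (max (k - s) 0)) := by
  rcases lt_or_ge s k with hks | hks
  · have hval : (∫ _ξ in k..s, (-1:ℝ)) = k - s := by
      rw [intervalIntegral.integral_const, smul_eq_mul]
      ring
    rw [max_eq_left (by linarith : (0:ℝ) ≤ k - s), ← hval]
    refine tendsto_int k s 1 _ (fun _ => -1) (wM_cont k) (fun n ξ _ => wM_abs k n ξ) ?_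
    intro ξ hξ
    rw [min_eq_right hks.le, max_eq_left hks.le] at hξ
    exact tendsto_const_nhds.congr' ((wM_event_neg_one k hξ.2).mono fun n hn => hn.symm)
  · have h0 : ∀ n, (∫ ξ in k..s, wM k n ξ) = 0 := by
      intro n
      have hEq : Set.EqOn (fun ξ => wM k n ξ) (fun _ => (0:ℝ)) (Set.uIcc k s) := by
        intro ξ hξ
        rw [Set.uIcc_of_le hks] at hξ
        exact wM_zero_of_ge k n hξ.1
      rw [intervalIntegral.integral_congr hEq]
      simp
    rw [max_eq_right (by linarith : k - s ≤ (0:ℝ))]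
    simpa [h0] using (tendsto_const_nhds :
      Tendsto (fun _ : ℕ => (0:ℝ)) atTop (nhds 0))

private lemma qP_tendsto (f : ℝ → ℝ) (hf : ContDiff ℝ 2 f) (k s : ℝ) :
    Tendsto (fun n => ∫ ξ in k..s, wP k n ξ * deriv f ξ) atTop
      (nhds (signPos (s - k) * (f s - f k))) := by
  have hfd : Continuous (deriv f) := hf.continuous_deriv (by norm_num)
  rcases lt_or_ge k s with hks | hks
  · have hval : (∫ ξ in k..s, deriv f ξ) = f s - f k :=
      intervalIntegral.integral_deriv_eq_sub
        (fun ξ _ => (hf.differentiable (by norm_num)).differentiableAt)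
        (hfd.intervalIntegrable k s)
    rw [show signPos (s - k) = 1 from if_pos (by linarith), one_mul, ← hval]
    obtain ⟨Cf, hCf⟩ := (isCompact_uIcc (a := k) (b := s)).exists_bound_of_continuousOn
      hfd.continuousOn
    refine tendsto_int k s Cf _ (deriv f) (fun n => (wP_cont k n).mul hfd)
      (fun n ξ hξ => ?_) ?_
    · have h1 : |wP k n ξ * deriv f ξ| ≤ |deriv f ξ| := by
        rw [abs_mul]
        exact mul_le_of_le_one_left (abs_nonneg _) (wP_abs k n ξ)
      exact h1.trans (by simpa only [Real.norm_eq_abs] using hCf ξ hξ)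
    · intro ξ hξ
      rw [min_eq_left hks.le, max_eq_right hks.le] at hξ
      refine tendsto_const_nhds.congr' ((wP_event_one k hξ.1).mono fun n hn => ?_)
      simp [hn]
  · have h0 : ∀ n, (∫ ξ in k..s, wP k n ξ * deriv f ξ) = 0 := by
      intro n
      have hEq : Set.EqOn (fun ξ => wP k n ξ * deriv f ξ) (fun _ => (0:ℝ)) (Set.uIcc k s) := by
        intro ξ hξ
        rw [Set.uIcc_of_ge hks] at hξ
        simp [wP_zero_of_le k n hξ.2]
      rw [intervalIntegral.integral_congr hEq]
      simp
    rw [show signPos (s - k) = 0 from if_neg (not_lt.2 (by linarith)), zero_mul]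
    simpa [h0] using (tendsto_const_nhds :
      Tendsto (fun _ : ℕ => (0:ℝ)) atTop (nhds 0))

private lemma qM_tendsto (f : ℝ → ℝ) (hf : ContDiff ℝ 2 f) (k s : ℝ) :
    Tendsto (fun n => ∫ ξ in k..s, wM k n ξ * deriv f ξ) atTop
      (nhds (signNeg (s - k) * (f s - f k))) := by
  have hfd : Continuous (deriv f) := hf.continuous_deriv (by norm_num)
  rcases lt_or_ge s k with hks | hks
  · have hval : (∫ ξ in k..s, -deriv f ξ) = -(f s - f k) := by
      rw [intervalIntegral.integral_neg, intervalIntegral.integral_deriv_eq_sub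
        (fun ξ _ => (hf.differentiable (by norm_num)).differentiableAt)
        (hfd.intervalIntegrable k s)]
    rw [show signNeg (s - k) = -1 from if_pos (by linarith), neg_one_mul, ← hval]
    obtain ⟨Cf, hCf⟩ := (isCompact_uIcc (a := k) (b := s)).exists_bound_of_continuousOn
      hfd.continuousOn
    refine tendsto_int k s Cf _ (fun ξ => -deriv f ξ) (fun n => (wM_cont k n).mul hfd)
      (fun n ξ hξ => ?_) ?_
    · have h1 : |wM k n ξ * deriv f ξ| ≤ |deriv f ξ| := by
        rw [abs_mul]
        exact mul_le_of_le_one_left (abs_nonneg _) (wM_abs k n ξ)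
      exact h1.trans (by simpa only [Real.norm_eq_abs] using hCf ξ hξ)
    · intro ξ hξ
      rw [min_eq_right hks.le, max_eq_left hks.le] at hξ
      refine tendsto_const_nhds.congr' ((wM_event_neg_one k hξ.2).mono fun n hn => ?_)
      simp [hn]
  · have h0 : ∀ n, (∫ ξ in k..s, wM k n ξ * deriv f ξ) = 0 := by
      intro n
      have hEq : Set.EqOn (fun ξ => wM k n ξ * deriv f ξ) (fun _ => (0:ℝ)) (Set.uIcc k s) := by
        intro ξ hξ
        rw [Set.uIcc_of_le hks] at hξ
        simp [wM_zero_of_ge k n hξ.1]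
      rw [intervalIntegral.integral_congr hEq]
      simp
    rw [show signNeg (s - k) = 0 from if_neg (not_lt.2 (by linarith)), zero_mul]
    simpa [h0] using (tendsto_const_nhds :
      Tendsto (fun _ : ℕ => (0:ℝ)) atTop (nhds 0))

/-- Uniform local bounds for the approximating entropy families. -/
private lemma family_bdd (f : ℝ → ℝ) (hf : ContDiff ℝ 2 f) (k : ℝ) (w : ℕ → ℝ → ℝ)
    (hw1 : ∀ n ξ, |w n ξ| ≤ 1) :
    ∀ R : ℝ, 0 ≤ R → ∃ K, 0 ≤ K ∧ ∀ n s, |s| ≤ R →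
      |∫ ξ in k..s, w n ξ| ≤ K ∧ |∫ ξ in k..s, w n ξ * deriv f ξ| ≤ K ∧ |w n s| ≤ K := by
  intro R hR
  have hfd : Continuous (deriv f) := hf.continuous_deriv (by norm_num)
  obtain ⟨Cf, hCf⟩ := (isCompact_Icc (a := -(R + |k|)) (b := R + |k|)).exists_bound_of_continuousOn
    hfd.continuousOn
  have hk0 : (0:ℝ) ≤ |k| := abs_nonneg k
  have hCf0 : 0 ≤ Cf := le_trans (norm_nonneg _) (hCf 0 ⟨by linarith, by linarith⟩)
  refine ⟨max ((1 + Cf) * (R + |k|)) 1, le_trans zero_le_one (le_max_right _ _), ?_⟩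
  intro n s hs
  have hsk : |s - k| ≤ R + |k| := by
    have h1 : |s - k| ≤ |s| + |k| := by
      rw [sub_eq_add_neg]
      simpa [abs_neg] using abs_add_le s (-k)
    linarith
  have hmem : ∀ ξ ∈ Set.uIoc k s, ξ ∈ Icc (-(R + |k|)) (R + |k|) := by
    intro ξ hξ
    have hk1 : -(R + |k|) ≤ k := by linarith [neg_abs_le k]
    have hs1 : -(R + |k|) ≤ s := by linarith [neg_abs_le s, (abs_le.1 hs).1]
    have hk2 : k ≤ R + |k| := by linarith [le_abs_self k]
    have hs2 : s ≤ R + |k| := by linarith [(abs_le.1 hs).2]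
    refine ⟨?_, hξ.2.trans (max_le hk2 hs2)⟩
    have := le_min hk1 hs1
    linarith [hξ.1]
  have hint1 : |∫ ξ in k..s, w n ξ| ≤ 1 * |s - k| := by
    have := intervalIntegral.norm_integral_le_of_norm_le_const
      (f := w n) (a := k) (b := s) (C := 1)
      (fun ξ _ => by simpa only [Real.norm_eq_abs] using hw1 n ξ)
    simpa only [Real.norm_eq_abs] using this
  have hint2 : |∫ ξ in k..s, w n ξ * deriv f ξ| ≤ Cf * |s - k| := by
    have := intervalIntegral.norm_integral_le_of_norm_le_const
      (f := fun ξ => w n ξ * deriv f ξ) (a := k) (b := s) (C := Cf) ?_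
    · simpa only [Real.norm_eq_abs] using this
    · intro ξ hξ
      have h1 : |w n ξ * deriv f ξ| ≤ |deriv f ξ| := by
        rw [abs_mul]
        exact mul_le_of_le_one_left (abs_nonneg _) (hw1 n ξ)
      simp only [Real.norm_eq_abs]
      exact h1.trans (by simpa only [Real.norm_eq_abs] using hCf ξ (hmem ξ hξ))
  have habs : (0:ℝ) ≤ |s - k| := abs_nonneg _
  refine ⟨?_, ?_, le_trans (hw1 n s) (le_max_right _ _)⟩
  · refine le_trans hint1 (le_trans ?_ (le_max_left _ _))
    nlinarith
  · refine le_trans hint2 (le_trans ?_ (le_max_left _ _))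
    nlinarith

end SemiKruzkovFamilies


/-- semi-Kružkov entropy pairs can be used in the
entropy process inequality. -/
theorem semi_kruzkov_in_process_inequality
    (xl xr T : ℝ) (hx : xl < xr) (hT : 0 < T)
    (f b z' u0 ul ur : ℝ → ℝ)
    (hf : ContDiff ℝ 2 f) (hb : ContDiff ℝ 1 b)
    (hb' : ∃ K, ∀ s, |deriv b s| ≤ K)
    (hz'm : Measurable z') (hz'b : ∃ K, ∀ x, |z' x| ≤ K)
    (hu0m : Measurable u0) (hu0b : ∃ M, ∀ x, |u0 x| ≤ M)
    (hulm : Measurable ul) (hulb : ∃ M, ∀ t, |ul t| ≤ M)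
    (hurm : Measurable ur) (hurb : ∃ M, ∀ t, |ur t| ≤ M)
    (μ : ℝ → ℝ → ℝ → ℝ)
    (hμ : IsEntropyProcessSol xl xr T f b z' u0 ul ur μ)
    (k : ℝ) (φ : ℝ × ℝ → ℝ) (hφ : IsTestFun T φ) :
    (0 ≤ (∫ t in Ioo 0 T, ∫ x in Ioo xl xr, ∫ α in Ioo (0:ℝ) 1,
            (max (μ x t α - k) 0 * dtFun φ x t
              + signPos (μ x t α - k) * (f (μ x t α) - f k) * dxFun φ x t))
        - (∫ t in Ioo 0 T, ∫ x in Ioo xl xr, ∫ α in Ioo (0:ℝ) 1,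
            signPos (μ x t α - k) * z' x * b (μ x t α) * φ (x, t))
        + (∫ x in Ioo xl xr, max (u0 x - k) 0 * φ (x, 0))
        + lipOn f (procSup xl xr T μ) *
            (∫ t in Ioo 0 T,
              (max (ur t - k) 0 * φ (xr, t) + max (ul t - k) 0 * φ (xl, t)))) ∧
    (0 ≤ (∫ t in Ioo 0 T, ∫ x in Ioo xl xr, ∫ α in Ioo (0:ℝ) 1,
            (max (k - μ x t α) 0 * dtFun φ x t
              + signNeg (μ x t α - k) * (f (μ x t α) - f k) * dxFun φ x t))
        - (∫ t in Ioo 0 T, ∫ x in Ioo xl xr, ∫ α in Ioo (0:ℝ) 1,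
            signNeg (μ x t α - k) * z' x * b (μ x t α) * φ (x, t))
        + (∫ x in Ioo xl xr, max (k - u0 x) 0 * φ (x, 0))
        + lipOn f (procSup xl xr T μ) *
            (∫ t in Ioo 0 T,
              (max (k - ur t) 0 * φ (xr, t) + max (k - ul t) 0 * φ (xl, t)))) := by
  have hbcont : Continuous b := hb.continuous
  constructor
  · -- positive semi-Kružkov entropy
    have hp := fun n => pair_aux f hf k (wP k n) (wP_contDiff k n) (wP_mono k n) (wP_k k n)
    have hpair : ∀ n, IsBoundaryEntropyPair f (fun s => ∫ ξ in k..s, wP k n ξ)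
        (fun s => ∫ ξ in k..s, wP k n ξ * deriv f ξ) := fun n => (hp n).1
    have hderiv : ∀ n s, deriv (fun u => ∫ ξ in k..u, wP k n ξ) s = wP k n s :=
      fun n => (hp n).2
    refine key_limit xl xr T f b z' u0 ul ur μ hμ hbcont hz'm hz'b hu0m hu0b hulm hulb
      hurm hurb φ hφ
      (fun n s => ∫ ξ in k..s, wP k n ξ) (fun n s => ∫ ξ in k..s, wP k n ξ * deriv f ξ)
      hpair
      (fun s => max (s - k) 0) (fun s => signPos (s - k) * (f s - f k))
      (fun s => signPos (s - k))
      ((measurable_id.sub measurable_const).max measurable_const)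
      ((measurable_signPos.comp (measurable_id.sub measurable_const)).mul
        (hf.continuous.measurable.sub measurable_const))
      (measurable_signPos.comp (measurable_id.sub measurable_const))
      (fun s => etaP_tendsto k s)
      (fun s => qP_tendsto f hf k s)
      (fun s => (wP_tendsto k s).congr fun n => (hderiv n s).symm)
      ?_
    intro R hR
    obtain ⟨K, hK0, hK⟩ := family_bdd f hf k (wP k) (wP_abs k) R hR
    refine ⟨K, hK0, fun n s hs => ⟨(hK n s hs).1, (hK n s hs).2.1, ?_⟩⟩
    rw [hderiv n s]
    exact (hK n s hs).2.2
  · -- negative semi-Kružkov entropy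
    have hp := fun n => pair_aux f hf k (wM k n) (wM_contDiff k n) (wM_mono k n) (wM_k k n)
    have hpair : ∀ n, IsBoundaryEntropyPair f (fun s => ∫ ξ in k..s, wM k n ξ)
        (fun s => ∫ ξ in k..s, wM k n ξ * deriv f ξ) := fun n => (hp n).1
    have hderiv : ∀ n s, deriv (fun u => ∫ ξ in k..u, wM k n ξ) s = wM k n s :=
      fun n => (hp n).2
    refine key_limit xl xr T f b z' u0 ul ur μ hμ hbcont hz'm hz'b hu0m hu0b hulm hulb
      hurm hurb φ hφ
      (fun n s => ∫ ξ in k..s, wM k n ξ) (fun n s => ∫ ξ in k..s, wM k n ξ * deriv f ξ)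
      hpair
      (fun s => max (k - s) 0) (fun s => signNeg (s - k) * (f s - f k))
      (fun s => signNeg (s - k))
      ((measurable_const.sub measurable_id).max measurable_const)
      ((measurable_signNeg.comp (measurable_id.sub measurable_const)).mul
        (hf.continuous.measurable.sub measurable_const))
      (measurable_signNeg.comp (measurable_id.sub measurable_const))
      (fun s => etaM_tendsto k s)
      (fun s => qM_tendsto f hf k s)
      (fun s => (wM_tendsto k s).congr fun n => (hderiv n s).symm)
      ?_
    intro R hR
    obtain ⟨K, hK0, hK⟩ := family_bdd f hf k (wM k) (wM_abs k) R hR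
    refine ⟨K, hK0, fun n s hs => ⟨(hK n s hs).1, (hK n s hs).2.1, ?_⟩⟩
    rw [hderiv n s]
    exact (hK n s hs).2.2

end
end

section
/- Assume the CFL condition Lip_{K^Δx_T}(f) · Δt/Δx ≤ 1. Then the well-balanced Engquist–Osher scheme satisfies: for all n with nΔt ≤ T, sup_{j ∈ J} |u^n_j| ≤ C^Δx_T, and for all n with (n+1)Δt ≤ T, sup_{j ∈ J} |u^n_{j−1,+}| ≤ C^Δx_T and sup_{j ∈ J} |u^n_{j+1,−}| ≤ C^Δx_T. -/
open MeasureTheory Set Filter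

noncomputable section

lemma derivD_ge {D : ℝ → ℝ} (h : 0 < sInf (Set.range (deriv D))) (s : ℝ) :
    sInf (Set.range (deriv D)) ≤ deriv D s := by
  by_cases hb : BddBelow (Set.range (deriv D))
  · exact csInf_le hb ⟨s, rfl⟩
  · rw [Real.sInf_of_not_bddBelow hb] at h; linarith

lemma abs_avg_le {G : ℝ → ℝ} {a b S : ℝ} (hab : a < b)
    (hS : ∀ x ∈ Ioo a b, |G x| ≤ S) :
    |(b - a)⁻¹ * ∫ x in a..b, G x| ≤ S := by
  have hS0 : 0 ≤ S := le_trans (abs_nonneg _) (hS ((a+b)/2) ⟨by linarith, by linarith⟩)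
  have hae : ∀ᵐ x : ℝ, x ≠ b := by
    refine (MeasureTheory.ae_iff).2 ?_
    simpa using MeasureTheory.measure_singleton (μ := (volume : Measure ℝ)) b
  have h1 : ‖∫ x in a..b, G x‖ ≤ S * |b - a| := by
    apply intervalIntegral.norm_integral_le_of_norm_le_const_ae
    filter_upwards [hae] with x hx hmem
    rw [Set.uIoc_of_le hab.le] at hmem
    exact hS x ⟨hmem.1, lt_of_le_of_ne hmem.2 hx⟩
  rw [abs_mul, abs_inv]
  rw [Real.norm_eq_abs] at h1
  have hba : |b - a| = b - a := abs_of_pos (by linarith)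
  rw [hba] at h1 ⊢
  have hba0 : (0:ℝ) < b - a := by linarith
  calc (b-a)⁻¹ * |∫ x in a..b, G x| ≤ (b-a)⁻¹ * (S * (b-a)) := by
        exact mul_le_mul_of_nonneg_left h1 (by positivity)
    _ = S := by field_simp

lemma deriv_le_lipOn {f : ℝ → ℝ} (hf : ContDiff ℝ 2 f) {C ξ : ℝ}
    (hξ : ξ ∈ Ioo (-C) C) : |deriv f ξ| ≤ lipOn f C := by
  have hd : Differentiable ℝ f := hf.differentiable (by norm_num)
  have hc' : Continuous (deriv f) := hf.continuous_deriv (by norm_num)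
  obtain ⟨K, hK⟩ := (isCompact_Icc (a := -C) (b := C)).exists_bound_of_continuousOn
    hc'.continuousOn
  have hKbd : BddAbove {L : ℝ | ∃ u ∈ Icc (-C) C, ∃ v ∈ Icc (-C) C, u ≠ v ∧
      L = |f u - f v| / |u - v|} := by
    refine ⟨K, ?_⟩
    rintro L ⟨u, hu, v, hv, huv, rfl⟩
    have hmvt : ‖f u - f v‖ ≤ K * ‖u - v‖ := by
      refine Convex.norm_image_sub_le_of_norm_deriv_le
        (fun x _ => hd x) (fun x hx => hK x hx) (convex_Icc _ _) hv hu
    have huv' : (0:ℝ) < |u - v| := abs_pos.2 (sub_ne_zero.2 huv)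
    rw [div_le_iff₀ huv']
    simpa [Real.norm_eq_abs] using hmvt
  have hslope : Tendsto (fun y => |f y - f ξ| / |y - ξ|) (nhdsWithin ξ (Ioi ξ))
      (nhds |deriv f ξ|) := by
    have h1 : Tendsto (slope f ξ) (nhdsWithin ξ {ξ}ᶜ) (nhds (deriv f ξ)) :=
      hasDerivAt_iff_tendsto_slope.1 (hd ξ).hasDerivAt
    have h2 : Tendsto (slope f ξ) (nhdsWithin ξ (Ioi ξ)) (nhds (deriv f ξ)) :=
      h1.mono_left (nhdsWithin_mono _ (fun y hy => ne_of_gt hy))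
    have h3 := (continuous_abs.tendsto _).comp h2
    refine h3.congr (fun y => ?_)
    show |slope f ξ y| = _
    rw [slope_def_field, div_eq_inv_mul, abs_mul, abs_inv, inv_mul_eq_div]
  refine le_of_tendsto hslope ?_
  filter_upwards [Ioo_mem_nhdsGT hξ.2] with y hy
  refine le_csSup hKbd ?_
  exact ⟨y, ⟨le_of_lt (lt_trans hξ.1 hy.1), hy.2.le⟩, ξ, ⟨hξ.1.le, hξ.2.le⟩,
    (ne_of_gt hy.1), rfl⟩

lemma integral_absderiv_le {f : ℝ → ℝ} (hf : ContDiff ℝ 2 f) {C a b : ℝ}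
    (h1 : -C ≤ a) (h2 : a ≤ b) (h3 : b ≤ C) :
    ∫ x in a..b, |deriv f x| ≤ lipOn f C * (b - a) := by
  rcases eq_or_lt_of_le h2 with rfl | hlt
  · simp
  have hae : ∀ᵐ x : ℝ, x ≠ b := by
    refine (MeasureTheory.ae_iff).2 ?_
    simpa using MeasureTheory.measure_singleton (μ := (volume : Measure ℝ)) b
  have h4 : ‖∫ x in a..b, |deriv f x|‖ ≤ lipOn f C * |b - a| := by
    apply intervalIntegral.norm_integral_le_of_norm_le_const_ae
    filter_upwards [hae] with x hx hmem
    rw [Set.uIoc_of_le hlt.le] at hmem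
    have : x ∈ Ioo (-C) C := ⟨lt_of_le_of_lt h1 hmem.1,
      lt_of_lt_of_le (lt_of_le_of_ne hmem.2 hx) h3⟩
    simpa [abs_abs] using deriv_le_lipOn hf this
  calc ∫ x in a..b, |deriv f x| ≤ ‖∫ x in a..b, |deriv f x|‖ := le_abs_self _
    _ ≤ lipOn f C * |b - a| := h4
    _ = lipOn f C * (b - a) := by rw [abs_of_pos (by linarith)]



lemma gInt (f b D : ℝ → ℝ)
    (hD : ∀ s, D s = ∫ ξ in (0:ℝ)..s, deriv f ξ / b ξ)
    (hc : 0 < sInf (Set.range (deriv D))) (a : ℝ) :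
    IntervalIntegrable (fun ξ => deriv f ξ / b ξ) volume 0 a := by
  set g : ℝ → ℝ := fun ξ => deriv f ξ / b ξ with hg
  by_contra hni
  rcases le_total 0 a with ha | ha
  · have hzero : ∀ a', a ≤ a' → D a' = 0 := by
      intro a' haa
      have hni' : ¬ IntervalIntegrable g volume 0 a' := by
        intro hint
        refine hni (hint.mono_set ?_)
        rw [uIcc_of_le ha, uIcc_of_le (le_trans ha haa)]
        exact Icc_subset_Icc le_rfl haa
      rw [hD a', intervalIntegral.integral_undef hni']
    have hev : D =ᶠ[nhds (a + 1)] (fun _ => 0) := by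
      filter_upwards [Ioi_mem_nhds (by linarith : a < a + 1)] with x hx
      exact hzero x (le_of_lt hx)
    have h0 : deriv D (a + 1) = 0 := by rw [hev.deriv_eq]; simp
    have h2 := derivD_ge hc (a + 1)
    rw [h0] at h2; linarith
  · have hzero : ∀ a', a' ≤ a → D a' = 0 := by
      intro a' haa
      have hni' : ¬ IntervalIntegrable g volume 0 a' := by
        intro hint
        refine hni (hint.mono_set ?_)
        rw [uIcc_of_ge ha, uIcc_of_ge (le_trans haa ha)]
        exact Icc_subset_Icc haa le_rfl
      rw [hD a', intervalIntegral.integral_undef hni']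
    have hev : D =ᶠ[nhds (a - 1)] (fun _ => 0) := by
      filter_upwards [Iio_mem_nhds (by linarith : a - 1 < a)] with x hx
      exact hzero x (le_of_lt hx)
    have h0 : deriv D (a - 1) = 0 := by rw [hev.deriv_eq]; simp
    have h2 := derivD_ge hc (a - 1)
    rw [h0] at h2; linarith

lemma deriv_eq_derivD_mul_b (f b D : ℝ → ℝ) (hf : ContDiff ℝ 2 f) (hb : ContDiff ℝ 1 b)
    (hD : ∀ s, D s = ∫ ξ in (0:ℝ)..s, deriv f ξ / b ξ)
    (hDC : ContDiff ℝ 1 D)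
    (hc : 0 < sInf (Set.range (deriv D))) (s : ℝ) :
    deriv f s = deriv D s * b s := by
  set g : ℝ → ℝ := fun ξ => deriv f ξ / b ξ with hg
  have hfc : Continuous (deriv f) := hf.continuous_deriv (by norm_num)
  have hbc : Continuous b := hb.continuous
  have hgm : Measurable g := (hfc.measurable).div hbc.measurable
  have hDfun : D = fun t => ∫ ξ in (0:ℝ)..t, g ξ := funext hD
  have key : ∀ t, b t ≠ 0 → deriv D t = deriv f t / b t := by
    intro t hbt
    have hcont : ContinuousAt g t := (hfc.continuousAt).div hbc.continuousAt hbt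
    have hder : HasDerivAt (fun u => ∫ ξ in (0:ℝ)..u, g ξ) (g t) t :=
      intervalIntegral.integral_hasDerivAt_right (gInt f b D hD hc t)
        hgm.aestronglyMeasurable.stronglyMeasurableAtFilter hcont
    rw [hDfun]
    exact hder.deriv
  by_cases hbs : b s = 0
  · rw [hbs, mul_zero]
    by_contra hne
    set ε := |deriv f s| / 2 with hε
    have hfs0 : 0 < |deriv f s| := abs_pos.2 hne
    have hε0 : 0 < ε := by positivity
    have hδ0 : ∀ᶠ ξ in nhds s, ε < |deriv f ξ| :=
      ContinuousAt.eventually_lt continuousAt_const hfc.abs.continuousAt (by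
        show ε < |deriv f s|; rw [hε]; linarith)
    by_cases hloc : ∀ᶠ ξ in nhds s, b ξ = 0
    · obtain ⟨δ, hδpos, hδ⟩ := Metric.eventually_nhds_iff.1 hloc
      have hev : D =ᶠ[nhds s] (fun _ => D s) := by
        filter_upwards [Metric.ball_mem_nhds s hδpos] with t ht
        have ht' : |t - s| < δ := by simpa [Real.dist_eq] using ht
        have h1 : D t - D s = ∫ ξ in s..t, g ξ := by
          rw [hD t, hD s,
            intervalIntegral.integral_interval_sub_left (gInt f b D hD hc t)
              (gInt f b D hD hc s)]
        have h2 : (∫ ξ in s..t, g ξ) = 0 := by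
          rw [intervalIntegral.integral_congr (g := fun _ => (0:ℝ)) ?_]
          · simp
          · intro ξ hξ
            have hd : dist ξ s < δ := by
              rw [Real.dist_eq]
              rw [abs_lt] at ht' ⊢
              rcases mem_uIcc.1 hξ with ⟨h1', h2'⟩ | ⟨h1', h2'⟩ <;>
                constructor <;> linarith [ht'.1, ht'.2]
            have hb0 : b ξ = 0 := hδ hd
            simp [hg, hb0]
        linarith [h1, h2]
      have h0 : deriv D s = 0 := by rw [hev.deriv_eq]; simp
      have h2 := derivD_ge hc s
      rw [h0] at h2; linarith
    · have hfreq : ∃ᶠ ξ in nhds s, b ξ ≠ 0 := by rwa [Filter.not_eventually] at hloc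
      set R := |deriv D s| + 1 with hR
      have hR0 : 0 < R := by positivity
      have hδ1 : ∀ᶠ ξ in nhds s, |deriv D ξ| < R :=
        ContinuousAt.eventually_lt ((hDC.continuous_deriv le_rfl).abs.continuousAt)
          continuousAt_const (by show |deriv D s| < R; rw [hR]; linarith)
      have hδ2 : ∀ᶠ ξ in nhds s, |b ξ| < ε / R :=
        ContinuousAt.eventually_lt hbc.abs.continuousAt continuousAt_const (by
          show |b s| < ε / R; rw [hbs]; simp; positivity)
      obtain ⟨ξ, hξb, hξ0, hξ1, hξ2⟩ :=
        (hfreq.and_eventually (hδ0.and (hδ1.and hδ2))).exists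
      have hkey := key ξ hξb
      have habs : |deriv D ξ| = |deriv f ξ| / |b ξ| := by rw [hkey, abs_div]
      have hbpos : 0 < |b ξ| := abs_pos.2 hξb
      have hcontra : R < |deriv D ξ| := by
        rw [habs]
        have h1 : ε / (ε / R) ≤ |deriv f ξ| / |b ξ| :=
          div_le_div₀ (le_of_lt (lt_of_le_of_lt (by positivity) hξ0)) hξ0.le hbpos hξ2.le
        have h2 : ε / (ε / R) = R := by field_simp
        linarith [h2 ▸ h1]
      linarith
  · rw [key s hbs, div_mul_cancel₀ _ hbs]



lemma D_sub_ge {D : ℝ → ℝ} (hDC : ContDiff ℝ 1 D)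
    (hc : 0 < sInf (Set.range (deriv D))) {w r : ℝ} (h : w ≤ r) :
    sInf (Set.range (deriv D)) * (r - w) ≤ D r - D w := by
  have hint : IntervalIntegrable (deriv D) volume w r :=
    (hDC.continuous_deriv le_rfl).intervalIntegrable _ _
  have heq : D r - D w = ∫ x in w..r, deriv D x := by
    rw [intervalIntegral.integral_deriv_eq_sub (fun x _ => (hDC.differentiable one_ne_zero) x) hint]
  rw [heq]
  calc sInf (Set.range (deriv D)) * (r - w)
      = ∫ _ in w..r, sInf (Set.range (deriv D)) := by
        rw [intervalIntegral.integral_const, smul_eq_mul, mul_comm]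
    _ ≤ ∫ x in w..r, deriv D x := by
        apply intervalIntegral.integral_mono_on h (intervalIntegrable_const) hint
        intro x _; exact derivD_ge hc x

lemma D_mono {D : ℝ → ℝ} (hDC : ContDiff ℝ 1 D)
    (hc : 0 < sInf (Set.range (deriv D))) {w r : ℝ} (h : w ≤ r) : D w ≤ D r := by
  have := D_sub_ge hDC hc h
  nlinarith [hc, sub_nonneg.2 h]

lemma abs_sub_le_of_D {D : ℝ → ℝ} (hDC : ContDiff ℝ 1 D)
    (hc : 0 < sInf (Set.range (deriv D))) (w r : ℝ) :
    |r - w| ≤ |D r - D w| / sInf (Set.range (deriv D)) := by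
  set c := sInf (Set.range (deriv D))
  rw [le_div_iff₀ hc]
  rcases le_total w r with h | h
  · have h1 := D_sub_ge hDC hc h
    rw [abs_of_nonneg (sub_nonneg.2 h), abs_of_nonneg (sub_nonneg.2 (D_mono hDC hc h))]
    linarith
  · have h1 := D_sub_ge hDC hc h
    rw [abs_of_nonpos (sub_nonpos.2 h), abs_of_nonpos (sub_nonpos.2 (D_mono hDC hc h))]
    linarith

lemma corr_bound (f b D : ℝ → ℝ) (hf : ContDiff ℝ 2 f) (hb : ContDiff ℝ 1 b)
    (hDC : ContDiff ℝ 1 D) (hc : 0 < sInf (Set.range (deriv D)))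
    (hfd : ∀ s, deriv f s = deriv D s * b s)
    (hbb : BddAbove (Set.range fun s => |deriv b s|))
    {h : ℝ → ℝ} (hh : Continuous h) (hhle : ∀ ξ, |h ξ| ≤ |deriv f ξ|)
    {w r μ : ℝ} (hw : |w| ≤ μ) (hr : |r| ≤ μ) :
    |∫ ξ in w..r, h ξ| ≤
      (|b 0| + sSup (Set.range fun s => |deriv b s|) * μ) * |D r - D w| := by
  set β := sSup (Set.range fun s => |deriv b s|) with hβ
  have hβ0 : 0 ≤ β := le_trans (abs_nonneg _) (le_csSup hbb ⟨0, rfl⟩)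
  have hμ0 : 0 ≤ μ := le_trans (abs_nonneg _) hw
  set B := |b 0| + β * μ with hB
  have hB0 : 0 ≤ B := by positivity
  have hbmvt : ∀ ξ, |b ξ - b 0| ≤ β * |ξ| := by
    intro ξ
    have := Convex.norm_image_sub_le_of_norm_deriv_le
      (f := b) (C := β) (fun x _ => (hb.differentiable one_ne_zero) x)
      (fun x _ => le_csSup hbb ⟨x, rfl⟩) convex_univ (mem_univ 0) (mem_univ ξ)
    simpa [Real.norm_eq_abs] using this
  have hpt : ∀ ξ ∈ Icc (min w r) (max w r), |h ξ| ≤ B * deriv D ξ := by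
    intro ξ hξ
    have hξμ : |ξ| ≤ μ := by
      rw [abs_le] at hw hr ⊢
      constructor
      · calc -μ ≤ min w r := le_min (hw.1) (hr.1)
          _ ≤ ξ := hξ.1
      · calc ξ ≤ max w r := hξ.2
          _ ≤ μ := max_le hw.2 hr.2
    have hbξ : |b ξ| ≤ B := by
      have h1 : |b ξ| ≤ |b 0| + |b ξ - b 0| := by
        calc |b ξ| = |b 0 + (b ξ - b 0)| := by ring_nf
          _ ≤ |b 0| + |b ξ - b 0| := abs_add_le _ _
      have h2 := hbmvt ξ
      have h3 : β * |ξ| ≤ β * μ := mul_le_mul_of_nonneg_left hξμ hβ0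
      rw [hB]; linarith
    have hD0 : 0 ≤ deriv D ξ := le_trans hc.le (derivD_ge hc ξ)
    calc |h ξ| ≤ |deriv f ξ| := hhle ξ
      _ = deriv D ξ * |b ξ| := by rw [hfd ξ, abs_mul, abs_of_nonneg hD0]
      _ ≤ deriv D ξ * B := mul_le_mul_of_nonneg_left hbξ hD0
      _ = B * deriv D ξ := mul_comm _ _
  have hDint : IntervalIntegrable (fun ξ => B * deriv D ξ) volume w r :=
    (continuous_const.mul (hDC.continuous_deriv le_rfl)).intervalIntegrable _ _
  have main : ∀ {w' r' : ℝ}, w' ≤ r' → Icc w' r' ⊆ Icc (min w r) (max w r) →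
      |∫ ξ in w'..r', h ξ| ≤ B * (D r' - D w') := by
    intro w' r' hle hsub
    calc |∫ ξ in w'..r', h ξ| ≤ ∫ ξ in w'..r', |h ξ| := by
          simpa [Real.norm_eq_abs, abs_of_nonneg (sub_nonneg.2 hle)] using
            intervalIntegral.norm_integral_le_integral_norm (f := h) (a := w') (b := r') hle
      _ ≤ ∫ ξ in w'..r', B * deriv D ξ := by
          apply intervalIntegral.integral_mono_on hle (hh.abs.intervalIntegrable _ _)
            ((continuous_const.mul (hDC.continuous_deriv le_rfl)).intervalIntegrable _ _)
          intro x hx; exact hpt x (hsub hx)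
      _ = B * (D r' - D w') := by
          rw [intervalIntegral.integral_const_mul,
            intervalIntegral.integral_deriv_eq_sub (fun x _ => (hDC.differentiable one_ne_zero) x)
              ((hDC.continuous_deriv le_rfl).intervalIntegrable _ _)]
  rcases le_total w r with hle | hle
  · have h1 := main hle (by rw [min_eq_left hle, max_eq_right hle])
    have h2 : |D r - D w| = D r - D w := abs_of_nonneg (sub_nonneg.2 (D_mono hDC hc hle))
    rw [h2]; exact h1
  · have h1 := main hle (by rw [min_eq_right hle, max_eq_left hle])
    have h2 : |D r - D w| = D w - D r := by
      rw [abs_of_nonpos (sub_nonpos.2 (D_mono hDC hc hle))]; ring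
    rw [h2, intervalIntegral.integral_symm, abs_neg]
    exact h1



lemma conv_bound {f : ℝ → ℝ} (hf : ContDiff ℝ 2 f) {C lam u v w A : ℝ}
    (hu : |u| ≤ A) (hv : |v| ≤ A) (hw : |w| ≤ A) (hAC : A ≤ C)
    (hlam : 0 ≤ lam) (hCFL : lam * lipOn f C ≤ 1) :
    |v - lam * ((∫ ξ in u..v, max (deriv f ξ) 0) + (∫ ξ in w..v, max (-(deriv f ξ)) 0))|
      ≤ A := by
  have hfc : Continuous (deriv f) := hf.continuous_deriv (by norm_num)
  set p : ℝ → ℝ := fun ξ => max (deriv f ξ) 0 with hp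
  set q : ℝ → ℝ := fun ξ => max (-(deriv f ξ)) 0 with hq
  have hpc : Continuous p := hfc.max continuous_const
  have hqc : Continuous q := hfc.neg.max continuous_const
  have hpnn : ∀ ξ, 0 ≤ p ξ := fun ξ => le_max_right _ _
  have hqnn : ∀ ξ, 0 ≤ q ξ := fun ξ => le_max_right _ _
  have hpq : ∀ ξ, p ξ + q ξ = |deriv f ξ| := by
    intro ξ
    show max (deriv f ξ) 0 + max (-(deriv f ξ)) 0 = |deriv f ξ|
    rcases le_total 0 (deriv f ξ) with h | h
    · rw [max_eq_left h, max_eq_right (by linarith), abs_of_nonneg h]; ring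
    · rw [max_eq_right h, max_eq_left (by linarith), abs_of_nonpos h]; ring
  have hint : ∀ (g : ℝ → ℝ), Continuous g → ∀ a b : ℝ, IntervalIntegrable g volume a b :=
    fun g hg a b => hg.intervalIntegrable a b
  have habs : ∀ x, |x| ≤ A → -A ≤ x ∧ x ≤ A := fun x hx => abs_le.1 hx
  obtain ⟨hu1, hu2⟩ := habs u hu; obtain ⟨hv1, hv2⟩ := habs v hv
  obtain ⟨hw1, hw2⟩ := habs w hw
  have hA0 : 0 ≤ A := le_trans (abs_nonneg _) hv
  -- rewrite in the "+ lam * (∫ v..u + ∫ v..w)" form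
  have hform : v - lam * ((∫ ξ in u..v, p ξ) + (∫ ξ in w..v, q ξ))
      = v + lam * ((∫ ξ in v..u, p ξ) + (∫ ξ in v..w, q ξ)) := by
    rw [intervalIntegral.integral_symm u v, intervalIntegral.integral_symm w v]; ring
  rw [hform, abs_le]
  -- upper bound
  have hup : ∀ (g : ℝ → ℝ), Continuous g → (∀ ξ, 0 ≤ g ξ) → ∀ {x y : ℝ}, x ≤ y →
      (∫ ξ in v..x, g ξ) ≤ ∫ ξ in v..y, g ξ := by
    intro g hg hgnn x y hxy
    have := intervalIntegral.integral_interval_sub_left (hint g hg v y) (hint g hg v x)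
    have h2 : 0 ≤ ∫ ξ in x..y, g ξ := intervalIntegral.integral_nonneg hxy (fun ξ _ => hgnn ξ)
    linarith
  constructor
  · -- -A ≤ expr
    have h1 : (∫ ξ in v..(-A), p ξ) ≤ ∫ ξ in v..u, p ξ := hup p hpc hpnn hu1
    have h2 : (∫ ξ in v..(-A), q ξ) ≤ ∫ ξ in v..w, q ξ := hup q hqc hqnn hw1
    have h3 : (∫ ξ in v..(-A), p ξ) + (∫ ξ in v..(-A), q ξ)
        = -∫ ξ in (-A)..v, |deriv f ξ| := by
      rw [← intervalIntegral.integral_add (hint p hpc v (-A)) (hint q hqc v (-A)),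
        intervalIntegral.integral_symm (-A) v]
      congr 1
      exact intervalIntegral.integral_congr (fun ξ _ => hpq ξ)
    have h4 : (∫ ξ in (-A)..v, |deriv f ξ|) ≤ lipOn f C * (v - (-A)) :=
      integral_absderiv_le hf (by linarith) (by linarith) (by linarith)
    have h5 : lam * ((∫ ξ in v..u, p ξ) + (∫ ξ in v..w, q ξ))
        ≥ lam * (-(lipOn f C * (v + A))) := by
      apply mul_le_mul_of_nonneg_left _ hlam
      have : -(lipOn f C * (v + A)) ≤ (∫ ξ in v..(-A), p ξ) + (∫ ξ in v..(-A), q ξ) := by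
        rw [h3]; have := h4; nlinarith [h4]
      linarith
    have h6 : lam * (lipOn f C * (v + A)) ≤ v + A := by
      have hL0 : 0 ≤ lipOn f C * (v+A) → lam * (lipOn f C * (v + A)) ≤ 1 * (v + A) := by
        intro hpos
        calc lam * (lipOn f C * (v+A)) = (lam * lipOn f C) * (v+A) := by ring
          _ ≤ 1 * (v + A) := by
            apply mul_le_mul_of_nonneg_right hCFL (by linarith)
      rcases le_total 0 (lipOn f C) with hL | hL
      · have := hL0 (by nlinarith); linarith
      · nlinarith
    nlinarith [h5, h6]
  · -- expr ≤ A
    have h1 : (∫ ξ in v..u, p ξ) ≤ ∫ ξ in v..A, p ξ := hup p hpc hpnn hu2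
    have h2 : (∫ ξ in v..w, q ξ) ≤ ∫ ξ in v..A, q ξ := hup q hqc hqnn hw2
    have h3 : (∫ ξ in v..A, p ξ) + (∫ ξ in v..A, q ξ) = ∫ ξ in v..A, |deriv f ξ| := by
      rw [← intervalIntegral.integral_add (hint p hpc v A) (hint q hqc v A)]
      exact intervalIntegral.integral_congr (fun ξ _ => hpq ξ)
    have h4 : (∫ ξ in v..A, |deriv f ξ|) ≤ lipOn f C * (A - v) :=
      integral_absderiv_le hf (by linarith) (by linarith) (by linarith)
    have h6 : lam * (lipOn f C * (A - v)) ≤ A - v := by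
      rcases le_total 0 (lipOn f C) with hL | hL
      · calc lam * (lipOn f C * (A - v)) = (lam * lipOn f C) * (A - v) := by ring
          _ ≤ 1 * (A - v) := mul_le_mul_of_nonneg_right hCFL (by linarith)
          _ = A - v := one_mul _
      · nlinarith
    have h5 : lam * ((∫ ξ in v..u, p ξ) + (∫ ξ in v..w, q ξ))
        ≤ lam * (lipOn f C * (A - v)) := by
      apply mul_le_mul_of_nonneg_left _ hlam
      linarith [h3 ▸ (add_le_add h1 h2), h4]
    linarith



lemma zCell_adj {z : ℝ → ℝ} {xl xr Δx Z : ℝ} (hΔx : 0 < Δx) {m : ℕ} (hm : 0 < m)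
    (hgrid : xr - xl = (m : ℝ) * Δx) (hzd : Differentiable ℝ z)
    (hZ : ∀ x ∈ Ioo xl xr, |deriv z x| ≤ Z)
    {j : ℤ} (h0 : -1 ≤ j) (h1 : j ≤ (m : ℤ) - 1) :
    |zCell z xl Δx m (j + 1) - zCell z xl Δx m j| ≤ Z * Δx := by
  have hxlr : xl < xr := by nlinarith [(Nat.cast_pos (α := ℝ)).2 hm]
  have hZ0 : 0 ≤ Z := le_trans (abs_nonneg _) (hZ ((xl+xr)/2) ⟨by linarith, by linarith⟩)
  rcases eq_or_lt_of_le h0 with rfl' | hj0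
  · -- j = -1
    have hj : j = -1 := rfl'.symm
    subst hj
    have e1 : zCell z xl Δx m (-1 + 1) = Δx⁻¹ * ∫ x in xl..(xl + Δx), z x := by
      rw [zCell]
      rw [if_neg (by norm_num), if_neg (by omega)]
      norm_num
    have e2 : zCell z xl Δx m (-1) = Δx⁻¹ * ∫ x in xl..(xl + Δx), z x := by
      rw [zCell, if_pos (by norm_num)]
    rw [e1, e2]; simp; positivity
  · rcases eq_or_lt_of_le h1 with hj1 | hj1
    · -- j = m - 1
      subst hj1
      have e1 : zCell z xl Δx m ((m : ℤ) - 1 + 1)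
          = Δx⁻¹ * ∫ x in (xl + ((m:ℝ) - 1) * Δx)..(xl + (m:ℝ) * Δx), z x := by
        rw [zCell, if_neg (by omega), if_pos (by omega)]
      have e2 : zCell z xl Δx m ((m : ℤ) - 1)
          = Δx⁻¹ * ∫ x in (xl + ((m:ℝ) - 1) * Δx)..(xl + (m:ℝ) * Δx), z x := by
        rw [zCell, if_neg (by omega), if_neg (by omega)]
        push_cast
        ring_nf
      rw [e1, e2]; simp; positivity
    · -- interior: 0 ≤ j ≤ m - 2
      have hj0' : 0 ≤ j := by omega
      have hj1' : j + 1 ≤ (m : ℤ) - 1 := by omega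
      have hjR : (0:ℝ) ≤ (j:ℝ) := by exact_mod_cast hj0'
      set a : ℝ := xl + (j : ℝ) * Δx with ha
      have e2 : zCell z xl Δx m j = Δx⁻¹ * ∫ x in a..(a + Δx), z x := by
        rw [zCell, if_neg (by omega), if_neg (by omega), ha]
        ring_nf
      have e1 : zCell z xl Δx m (j + 1) = Δx⁻¹ * ∫ x in (a + Δx)..(a + Δx + Δx), z x := by
        rw [zCell, if_neg (by omega), if_neg (by omega), ha]
        push_cast
        ring_nf
      have hzc : Continuous z := hzd.continuous
      have htrans : (∫ x in (a + Δx)..(a + Δx + Δx), z x) = ∫ x in a..(a + Δx), z (x + Δx) := by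
        rw [intervalIntegral.integral_comp_add_right]
      have hc2 : Continuous (fun x : ℝ => z (x + Δx)) := by fun_prop
      have hsub : (∫ x in a..(a+Δx), z (x + Δx)) - (∫ x in a..(a+Δx), z x)
          = ∫ x in a..(a+Δx), (z (x + Δx) - z x) := by
        rw [intervalIntegral.integral_sub (hc2.intervalIntegrable _ _)
          (hzc.intervalIntegrable _ _)]
      have hae : ∀ᵐ x : ℝ, x ≠ a + Δx := by
        refine (MeasureTheory.ae_iff).2 ?_
        simpa using MeasureTheory.measure_singleton (μ := (volume : Measure ℝ)) (a + Δx)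
      have hbound : ‖∫ x in a..(a+Δx), (z (x + Δx) - z x)‖ ≤ (Z * Δx) * |a + Δx - a| := by
        apply intervalIntegral.norm_integral_le_of_norm_le_const_ae
        filter_upwards [hae] with x hx hmem
        rw [Set.uIoc_of_le (by linarith)] at hmem
        have hx1 : x ∈ Ioo a (a + Δx) := ⟨hmem.1, lt_of_le_of_ne hmem.2 hx⟩
        have hxm : x ∈ Ioo xl xr := by
          constructor
          · have : xl ≤ a := by
              rw [ha]; nlinarith [hjR]
            linarith [hx1.1]
          · have : a + Δx ≤ xr := by
              rw [ha]
              have : ((j:ℝ) + 1) ≤ (m : ℝ) - 1 := by exact_mod_cast hj1'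
              nlinarith
            linarith [hx1.2]
        have hxm' : x + Δx ∈ Ioo xl xr := by
          constructor
          · have : xl ≤ a + Δx := by
              rw [ha]; nlinarith [hjR]
            linarith [hx1.1]
          · have : a + Δx + Δx ≤ xr := by
              rw [ha]
              have : ((j:ℝ) + 1) ≤ (m : ℝ) - 1 := by exact_mod_cast hj1'
              nlinarith
            linarith [hx1.2]
        have := Convex.norm_image_sub_le_of_norm_deriv_le (f := z) (C := Z)
          (fun y _ => hzd y) (fun y hy => hZ y hy) (convex_Ioo xl xr) hxm hxm'
        rw [Real.norm_eq_abs] at this ⊢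
        calc |z (x + Δx) - z x| ≤ Z * ‖x + Δx - x‖ := this
          _ = Z * Δx := by rw [Real.norm_eq_abs]; simp [abs_of_pos hΔx]
      rw [e1, e2, htrans, ← mul_sub, hsub]
      rw [abs_mul, abs_inv, abs_of_pos hΔx]
      have : |a + Δx - a| = Δx := by simp [abs_of_pos hΔx]
      rw [this] at hbound
      rw [Real.norm_eq_abs] at hbound
      calc Δx⁻¹ * |∫ x in a..(a+Δx), (z (x + Δx) - z x)| ≤ Δx⁻¹ * ((Z * Δx) * Δx) := by
            exact mul_le_mul_of_nonneg_left hbound (by positivity)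
        _ = Z * Δx := by field_simp

set_option maxHeartbeats 4000000 in
/-- boundedness of the numerical solutions of the
well-balanced Engquist-Osher scheme. -/
theorem boundedness_of_numerical_solutions
    (xl xr T : ℝ) (hx : xl < xr) (hT : 0 < T)
    (f b z u0 ul ur : ℝ → ℝ)
    (hf : ContDiff ℝ 2 f) (hb : ContDiff ℝ 1 b)
    (hbb : BddAbove (Set.range fun s => |deriv b s|))
    (hzd : Differentiable ℝ z)
    (hzb : BddAbove ((fun x => |deriv z x|) '' Ioo xl xr))
    (hu0m : Measurable u0) (hu0b : ∃ M, ∀ x, |u0 x| ≤ M)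
    (hulm : Measurable ul) (hulb : ∃ M, ∀ t, |ul t| ≤ M)
    (hurm : Measurable ur) (hurb : ∃ M, ∀ t, |ur t| ≤ M)
    (D : ℝ → ℝ) (hD : ∀ s, D s = ∫ ξ in (0:ℝ)..s, deriv f ξ / b ξ)
    (hDC : ContDiff ℝ 1 D) (hDsurj : Function.Surjective D)
    (hDinf : 0 < sInf (Set.range (deriv D)))
    (Δx Δt : ℝ) (hΔx : 0 < Δx) (hΔt : 0 < Δt)
    (m : ℕ) (hm : 0 < m) (hgrid : xr - xl = (m : ℝ) * Δx)
    (N : ℕ) (hN : T = (N : ℝ) * Δt)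
    (hCFL : lipOn f (CDxT xl xr T Δx b z u0 ul ur D) * (Δt / Δx) ≤ 1) :
    (∀ n : ℕ, (n : ℝ) * Δt ≤ T → ∀ j : ℤ, 0 ≤ j → j < (m : ℤ) →
        |schemeU f D z u0 ul ur xl Δx Δt m n j| ≤ CDxT xl xr T Δx b z u0 ul ur D) ∧
    (∀ n : ℕ, ((n : ℝ) + 1) * Δt ≤ T → ∀ j : ℤ, 0 ≤ j → j < (m : ℤ) →
        |recon D (zCell z xl Δx m (j - 1)) (zCell z xl Δx m j)
            (schemeU f D z u0 ul ur xl Δx Δt m n (j - 1))|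
          ≤ CDxT xl xr T Δx b z u0 ul ur D ∧
        |recon D (zCell z xl Δx m (j + 1)) (zCell z xl Δx m j)
            (schemeU f D z u0 ul ur xl Δx Δt m n (j + 1))|
          ≤ CDxT xl xr T Δx b z u0 ul ur D) := by
  classical
  set Z := sSup ((fun x => |deriv z x|) '' Ioo xl xr) with hZdef
  set β := sSup (Set.range fun s => |deriv b s|) with hβdef
  set c := sInf (Set.range (deriv D)) with hcdef
  set Mc := Mconst xl xr T u0 ul ur with hMdef
  set CT := CDxT xl xr T Δx b z u0 ul ur D with hCTdef
  have hc0 : 0 < c := hDinf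
  have hZb : ∀ x ∈ Ioo xl xr, |deriv z x| ≤ Z := fun x hx' => le_csSup hzb ⟨x, hx', rfl⟩
  have hZ0 : 0 ≤ Z := le_trans (abs_nonneg _) (hZb ((xl+xr)/2) ⟨by linarith, by linarith⟩)
  have hβ0 : 0 ≤ β := le_trans (abs_nonneg _) (le_csSup hbb ⟨0, rfl⟩)
  have hbd0 : BddAbove ((fun x => |u0 x|) '' Ioo xl xr) := by
    obtain ⟨K, hK⟩ := hu0b; exact ⟨K, by rintro y ⟨x', -, rfl⟩; exact hK x'⟩
  have hbdl : BddAbove ((fun t => |ul t|) '' Ioo 0 T) := by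
    obtain ⟨K, hK⟩ := hulb; exact ⟨K, by rintro y ⟨x', -, rfl⟩; exact hK x'⟩
  have hbdr : BddAbove ((fun t => |ur t|) '' Ioo 0 T) := by
    obtain ⟨K, hK⟩ := hurb; exact ⟨K, by rintro y ⟨x', -, rfl⟩; exact hK x'⟩
  have hu0S : ∀ x ∈ Ioo xl xr, |u0 x| ≤ Mc := fun x hx' =>
    le_trans (le_csSup hbd0 ⟨x, hx', rfl⟩) (le_max_left _ _)
  have hulS : ∀ t ∈ Ioo 0 T, |ul t| ≤ Mc := fun t ht' =>
    le_trans (le_csSup hbdl ⟨t, ht', rfl⟩) (le_trans (le_max_left _ _) (le_max_right _ _))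
  have hurS : ∀ t ∈ Ioo 0 T, |ur t| ≤ Mc := fun t ht' =>
    le_trans (le_csSup hbdr ⟨t, ht', rfl⟩) (le_trans (le_max_right _ _) (le_max_right _ _))
  have hM0 : 0 ≤ Mc := le_trans (abs_nonneg _) (hu0S ((xl+xr)/2) ⟨by linarith, by linarith⟩)
  have hfd : ∀ s, deriv f s = deriv D s * b s := deriv_eq_derivD_mul_b f b D hf hb hD hDC hDinf
  set lam := Δt / Δx with hlamdef
  have hlam0 : 0 ≤ lam := by positivity
  set κ := 2 * Z * β with hκdef
  set ρ := 2 * Z * (|b 0| + β * (Z * Δx / c)) with hρdef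
  have hκ0 : 0 ≤ κ := by rw [hκdef]; positivity
  have hy0 : 0 ≤ Z * Δx / c := div_nonneg (mul_nonneg hZ0 hΔx.le) hc0.le
  have hρ0 : 0 ≤ ρ := by
    rw [hρdef]
    have : 0 ≤ |b 0| + β * (Z * Δx / c) := by nlinarith [abs_nonneg (b 0)]
    nlinarith
  set G : ℕ → ℝ := fun n => (Mc + ρ * n * Δt) * (1 + κ * Δt) ^ n with hGdef
  have hGpow : ∀ n : ℕ, 1 ≤ (1 + κ * Δt) ^ n := by
    intro n
    have h : (1:ℝ) ≤ 1 + κ * Δt := by nlinarith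
    calc (1:ℝ) = 1 ^ n := (one_pow n).symm
      _ ≤ (1 + κ * Δt) ^ n := pow_le_pow_left₀ (by norm_num) h n
  have hGM : ∀ n : ℕ, Mc ≤ G n := by
    intro n
    have h1 := hGpow n
    have h2 : 0 ≤ ρ * n * Δt := by positivity
    have h3 : G n = (Mc + ρ * n * Δt) * (1 + κ * Δt) ^ n := rfl
    nlinarith
  have hreconD : ∀ (zc zj v : ℝ), D (recon D zc zj v) = D v + zc - zj := fun zc zj v =>
    Function.invFun_eq (hDsurj _)
  have hrecon : ∀ (zc zj v : ℝ), |zc - zj| ≤ Z * Δx →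
      |recon D zc zj v| ≤ |v| + Z * Δx / c := by
    intro zc zj v hz
    have h1 := abs_sub_le_of_D hDC hDinf v (recon D zc zj v)
    have h2 : D (recon D zc zj v) - D v = zc - zj := by rw [hreconD]; ring
    rw [h2] at h1
    have h3 : |zc - zj| / c ≤ Z * Δx / c := by gcongr
    have h4 : |recon D zc zj v| ≤ |v| + |recon D zc zj v - v| := by
      have := abs_add_le v (recon D zc zj v - v)
      have he : v + (recon D zc zj v - v) = recon D zc zj v := by ring
      rw [he] at this; exact this
    calc |recon D zc zj v| ≤ |v| + |recon D zc zj v - v| := h4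
      _ ≤ |v| + Z * Δx / c := by linarith
  have hzadj : ∀ j : ℤ, -1 ≤ j → j ≤ (m:ℤ) - 1 →
      |zCell z xl Δx m (j+1) - zCell z xl Δx m j| ≤ Z * Δx :=
    fun j h0 h1 => zCell_adj hΔx hm hgrid hzd hZb h0 h1
  have havg : ∀ (w : ℝ → ℝ) (S lo hi a b2 : ℝ), a < b2 → lo ≤ a → b2 ≤ hi →
      (∀ t ∈ Ioo lo hi, |w t| ≤ S) → |(b2 - a)⁻¹ * ∫ t in a..b2, w t| ≤ S := by
    intro w S lo hi a b2 hab hloa hbhi hbound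
    exact abs_avg_le hab (fun x' hx' =>
      hbound x' ⟨lt_of_le_of_lt hloa hx'.1, lt_of_lt_of_le hx'.2 hbhi⟩)
  have hGhost : ∀ n : ℕ, ((n:ℝ)+1) * Δt ≤ T → ∀ j : ℤ, j < 0 ∨ (m:ℤ) ≤ j →
      |schemeU f D z u0 ul ur xl Δx Δt m n j| ≤ Mc := by
    intro n hn j hj
    cases n with
    | zero =>
      have hΔtT : Δt ≤ T := by push_cast at hn; linarith
      rcases lt_or_ge j 0 with hj' | hj'
      · have he : schemeU f D z u0 ul ur xl Δx Δt m 0 j = Δt⁻¹ * ∫ t in (0:ℝ)..Δt, ul t := by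
          simp only [schemeU]; rw [if_pos hj']
        rw [he]
        have h := havg ul Mc 0 T 0 Δt hΔt le_rfl hΔtT hulS
        simpa using h
      · have hj'' : (m:ℤ) ≤ j := by omega
        have he : schemeU f D z u0 ul ur xl Δx Δt m 0 j = Δt⁻¹ * ∫ t in (0:ℝ)..Δt, ur t := by
          simp only [schemeU]; rw [if_neg (by omega), if_pos hj'']
        rw [he]
        have h := havg ur Mc 0 T 0 Δt hΔt le_rfl hΔtT hurS
        simpa using h
    | succ n =>
      have hn' : ((n:ℝ)+2) * Δt ≤ T := by push_cast at hn; linarith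
      have hab : ((n:ℝ)+1) * Δt < ((n:ℝ)+2) * Δt := by nlinarith [Nat.cast_nonneg (α := ℝ) n]
      have hlo : (0:ℝ) ≤ ((n:ℝ)+1) * Δt := by positivity
      rcases lt_or_ge j 0 with hj' | hj'
      · have he : schemeU f D z u0 ul ur xl Δx Δt m (n+1) j
            = Δt⁻¹ * ∫ t in (((n:ℝ)+1) * Δt)..(((n:ℝ)+2) * Δt), ul t := by
          simp only [schemeU]; rw [if_pos hj']
        rw [he]
        have h := havg ul Mc 0 T (((n:ℝ)+1) * Δt) (((n:ℝ)+2) * Δt) hab hlo hn' hulS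
        have he2 : ((n:ℝ)+2) * Δt - ((n:ℝ)+1) * Δt = Δt := by ring
        rw [he2] at h; exact h
      · have hj'' : (m:ℤ) ≤ j := by omega
        have he : schemeU f D z u0 ul ur xl Δx Δt m (n+1) j
            = Δt⁻¹ * ∫ t in (((n:ℝ)+1) * Δt)..(((n:ℝ)+2) * Δt), ur t := by
          simp only [schemeU]; rw [if_neg (by omega), if_pos hj'']
        rw [he]
        have h := havg ur Mc 0 T (((n:ℝ)+1) * Δt) (((n:ℝ)+2) * Δt) hab hlo hn' hurS
        have he2 : ((n:ℝ)+2) * Δt - ((n:ℝ)+1) * Δt = Δt := by ring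
        rw [he2] at h; exact h
  have hQ0 : ∀ j : ℤ, 0 ≤ j → j < (m:ℤ) →
      |schemeU f D z u0 ul ur xl Δx Δt m 0 j| ≤ Mc := by
    intro j hj0 hj1
    have hjR0 : (0:ℝ) ≤ (j:ℝ) := by exact_mod_cast hj0
    have hjR1 : (j:ℝ) + 1 ≤ (m:ℝ) := by exact_mod_cast (by omega : j + 1 ≤ (m:ℤ))
    have he : schemeU f D z u0 ul ur xl Δx Δt m 0 j
        = Δx⁻¹ * ∫ x' in (xl + (j:ℝ)*Δx)..(xl + ((j:ℝ)+1)*Δx), u0 x' := by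
      simp only [schemeU]; rw [if_neg (by omega), if_neg (by omega)]
    rw [he]
    have h := havg u0 Mc xl xr (xl + (j:ℝ)*Δx) (xl + ((j:ℝ)+1)*Δx)
      (by nlinarith) (by nlinarith) (by nlinarith) hu0S
    have he2 : (xl + ((j:ℝ)+1)*Δx) - (xl + (j:ℝ)*Δx) = Δx := by ring
    rw [he2] at h; exact h
  have hGC : ∀ n : ℕ, (n:ℝ) * Δt ≤ T → G n + Z * Δx / c ≤ CT := by
    intro n hn
    have hn0 : (0:ℝ) ≤ (n:ℝ) := Nat.cast_nonneg n
    have hE1 : (1 + κ * Δt) ^ n ≤ Real.exp (κ * T) := by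
      have h1 : 1 + κ * Δt ≤ Real.exp (κ * Δt) := by nlinarith [Real.add_one_le_exp (κ * Δt)]
      have h2 : (1 + κ * Δt) ^ n ≤ (Real.exp (κ * Δt)) ^ n :=
        pow_le_pow_left₀ (by nlinarith) h1 n
      have h3 : (Real.exp (κ * Δt)) ^ n = Real.exp ((n:ℝ) * (κ * Δt)) :=
        (Real.exp_nat_mul _ n).symm
      have h4 : Real.exp ((n:ℝ) * (κ * Δt)) ≤ Real.exp (κ * T) := by
        apply Real.exp_le_exp.2; nlinarith
      calc (1 + κ * Δt) ^ n ≤ (Real.exp (κ * Δt)) ^ n := h2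
        _ = Real.exp ((n:ℝ) * (κ * Δt)) := h3
        _ ≤ Real.exp (κ * T) := h4
    have hGle : G n ≤ (Mc + ρ * T) * Real.exp (κ * T) := by
      have h5 : Mc + ρ * n * Δt ≤ Mc + ρ * T := by nlinarith
      have h6 : G n = (Mc + ρ * n * Δt) * (1 + κ * Δt) ^ n := rfl
      rw [h6]
      exact mul_le_mul h5 hE1 (by positivity) (by nlinarith)
    have hCX : CT = Mc * Real.exp (2 * T * β * Z)
        + Δx * (Z / c) * Real.exp (4 * T * β * Z)
        + |b 0| * Real.exp (2 * T * (β + 1) * Z) := by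
      rw [hCTdef]; simp only [CDxT]; rfl
    have hx0 : 0 ≤ 2 * T * β * Z := by nlinarith [hT.le]
    have hEκT : Real.exp (κ * T) = Real.exp (2 * T * β * Z) := by
      congr 1; rw [hκdef]; ring
    have hE4 : Real.exp (4 * T * β * Z)
        = Real.exp (2 * T * β * Z) * Real.exp (2 * T * β * Z) := by
      rw [← Real.exp_add]; congr 1; ring
    have hE2 : Real.exp (2 * T * (β + 1) * Z)
        = Real.exp (2 * T * Z) * Real.exp (2 * T * β * Z) := by
      rw [← Real.exp_add]; congr 1; ring
    have h2tz : 2 * T * Z ≤ Real.exp (2 * T * Z) := by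
      nlinarith [Real.add_one_le_exp (2 * T * Z)]
    have hxe : (2 * T * β * Z) * Real.exp (2 * T * β * Z) + 1
        ≤ Real.exp (2 * T * β * Z) * Real.exp (2 * T * β * Z) := by
      nlinarith [Real.add_one_le_exp (2 * T * β * Z), Real.one_le_exp hx0,
        Real.exp_pos (2 * T * β * Z)]
    rw [hEκT] at hGle
    rw [hCX, hE4, hE2]
    have key1 : 2 * Z * |b 0| * T * Real.exp (2 * T * β * Z)
        ≤ |b 0| * (Real.exp (2 * T * Z) * Real.exp (2 * T * β * Z)) := by
      have h := mul_le_mul_of_nonneg_right h2tz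
        (mul_nonneg (abs_nonneg (b 0)) (Real.exp_pos (2 * T * β * Z)).le)
      nlinarith [h]
    have key2 : 2 * Z * β * (Z * Δx / c) * T * Real.exp (2 * T * β * Z) + Z * Δx / c
        ≤ Δx * (Z / c) * (Real.exp (2 * T * β * Z) * Real.exp (2 * T * β * Z)) := by
      have h := mul_le_mul_of_nonneg_left hxe hy0
      ring_nf at h ⊢
      linarith [h]
    have hexpand : (Mc + ρ * T) * Real.exp (2 * T * β * Z)
        = Mc * Real.exp (2 * T * β * Z) + 2 * Z * |b 0| * T * Real.exp (2 * T * β * Z)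
          + 2 * Z * β * (Z * Δx / c) * T * Real.exp (2 * T * β * Z) := by
      rw [hρdef]; ring
    linarith [hGle, key1, key2, hexpand.le, hexpand.ge]
  have hQ : ∀ n : ℕ, (n:ℝ) * Δt ≤ T → ∀ j : ℤ, 0 ≤ j → j < (m:ℤ) →
      |schemeU f D z u0 ul ur xl Δx Δt m n j| ≤ G n := by
    intro n
    induction n with
    | zero =>
      intro _ j hj0 hj1
      have hG0 : G 0 = Mc := by simp [hGdef]
      rw [hG0]; exact hQ0 j hj0 hj1
    | succ n ih =>
      intro hn1 j hj0 hj1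
      have hnut : ((n:ℝ)+1) * Δt ≤ T := by push_cast at hn1; linarith
      have hnT : (n:ℝ) * Δt ≤ T := by nlinarith
      have hnb : ∀ k : ℤ, |schemeU f D z u0 ul ur xl Δx Δt m n k| ≤ G n := by
        intro k
        by_cases hk : 0 ≤ k ∧ k < (m:ℤ)
        · exact ih hnT k hk.1 hk.2
        · exact le_trans (hGhost n hnut k (by omega)) (hGM n)
      set vm := schemeU f D z u0 ul ur xl Δx Δt m n (j-1) with hvm
      set v0 := schemeU f D z u0 ul ur xl Δx Δt m n j with hv0
      set vp := schemeU f D z u0 ul ur xl Δx Δt m n (j+1) with hvp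
      set zm := zCell z xl Δx m (j-1) with hzm
      set z0 := zCell z xl Δx m j with hz0
      set zp := zCell z xl Δx m (j+1) with hzp
      set RM := recon D zm z0 vm with hRM
      set RP := recon D zp z0 vp with hRP
      have hvmG : |vm| ≤ G n := hnb (j-1)
      have hv0G : |v0| ≤ G n := hnb j
      have hvpG : |vp| ≤ G n := hnb (j+1)
      have hunfold : schemeU f D z u0 ul ur xl Δx Δt m (n+1) j
          = v0 - lam * (eoFlux f v0 RP - eoFlux f RM v0) := by
        simp only [schemeU]
        rw [if_neg (by omega), if_neg (by omega)]
      have hfcont : Continuous (deriv f) := hf.continuous_deriv (by norm_num)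
      have hpc : Continuous (fun ξ => max (deriv f ξ) 0) := hfcont.max continuous_const
      have hqc : Continuous (fun ξ => max (-(deriv f ξ)) 0) := hfcont.neg.max continuous_const
      have hint : ∀ (g : ℝ → ℝ), Continuous g → ∀ a' b' : ℝ,
          IntervalIntegrable g volume a' b' := fun g hg a' b' => hg.intervalIntegrable a' b'
      have hflux : eoFlux f v0 RP - eoFlux f RM v0
          = (∫ ξ in RM..v0, max (deriv f ξ) 0) + (∫ ξ in RP..v0, max (-(deriv f ξ)) 0) := by
        rw [eoFlux, eoFlux]
        have h1 := intervalIntegral.integral_interval_sub_left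
          (hint _ hpc 0 v0) (hint _ hpc 0 RM)
        have h2 := intervalIntegral.integral_interval_sub_left
          (hint _ hqc 0 v0) (hint _ hqc 0 RP)
        linarith [h1, h2]
      have hsplit1 : (∫ ξ in RM..v0, max (deriv f ξ) 0)
          = (∫ ξ in RM..vm, max (deriv f ξ) 0) + (∫ ξ in vm..v0, max (deriv f ξ) 0) :=
        (intervalIntegral.integral_add_adjacent_intervals
          (hint _ hpc RM vm) (hint _ hpc vm v0)).symm
      have hsplit2 : (∫ ξ in RP..v0, max (-(deriv f ξ)) 0)
          = (∫ ξ in RP..vp, max (-(deriv f ξ)) 0) + (∫ ξ in vp..v0, max (-(deriv f ξ)) 0) :=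
        (intervalIntegral.integral_add_adjacent_intervals
          (hint _ hqc RP vp) (hint _ hqc vp v0)).symm
      have hkey : schemeU f D z u0 ul ur xl Δx Δt m (n+1) j
          = (v0 - lam * ((∫ ξ in vm..v0, max (deriv f ξ) 0)
              + (∫ ξ in vp..v0, max (-(deriv f ξ)) 0)))
            - lam * ((∫ ξ in RM..vm, max (deriv f ξ) 0)
              + (∫ ξ in RP..vp, max (-(deriv f ξ)) 0)) := by
        rw [hunfold, hflux, hsplit1, hsplit2]; ring
      have hGnC : G n ≤ CT := by linarith [hGC n hnT]
      have hconv := conv_bound hf hvmG hv0G hvpG hGnC hlam0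
        (by rw [mul_comm]; exact hCFL)
      have hzmb : |zm - z0| ≤ Z * Δx := by
        have h := hzadj (j-1) (by omega) (by omega)
        rw [show j - 1 + 1 = j from by omega] at h
        rw [abs_sub_comm] at h; exact h
      have hzpb : |zp - z0| ≤ Z * Δx := hzadj j (by omega) (by omega)
      set μ := G n + Z * Δx / c with hμ
      have hvmμ : |vm| ≤ μ := by rw [hμ]; linarith
      have hvpμ : |vp| ≤ μ := by rw [hμ]; linarith
      have hRMμ : |RM| ≤ μ := by
        have := hrecon zm z0 vm hzmb
        rw [hμ]; rw [hRM]; linarith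
      have hRPμ : |RP| ≤ μ := by
        have := hrecon zp z0 vp hzpb
        rw [hμ]; rw [hRP]; linarith
      have hμ0 : 0 ≤ μ := le_trans (abs_nonneg _) hvmμ
      have hB0 : 0 ≤ |b 0| + β * μ := add_nonneg (abs_nonneg _) (mul_nonneg hβ0 hμ0)
      have hple : ∀ ξ : ℝ, |max (deriv f ξ) 0| ≤ |deriv f ξ| := by
        intro ξ
        rw [abs_of_nonneg (le_max_right _ _)]
        exact max_le (le_abs_self _) (abs_nonneg _)
      have hqle : ∀ ξ : ℝ, |max (-(deriv f ξ)) 0| ≤ |deriv f ξ| := by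
        intro ξ
        rw [abs_of_nonneg (le_max_right _ _)]
        apply max_le _ (abs_nonneg _)
        rw [← abs_neg]; exact le_abs_self _
      have hcorr1 : |∫ ξ in RM..vm, max (deriv f ξ) 0|
          ≤ (|b 0| + β * μ) * |D vm - D RM| :=
        corr_bound f b D hf hb hDC hDinf hfd hbb hpc hple hRMμ hvmμ
      have hcorr2 : |∫ ξ in RP..vp, max (-(deriv f ξ)) 0|
          ≤ (|b 0| + β * μ) * |D vp - D RP| :=
        corr_bound f b D hf hb hDC hDinf hfd hbb hqc hqle hRPμ hvpμ
      have hDRM : |D vm - D RM| ≤ Z * Δx := by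
        have h : D vm - D RM = z0 - zm := by rw [hRM, hreconD]; ring
        rw [h, abs_sub_comm]; exact hzmb
      have hDRP : |D vp - D RP| ≤ Z * Δx := by
        have h : D vp - D RP = z0 - zp := by rw [hRP, hreconD]; ring
        rw [h, abs_sub_comm]; exact hzpb
      have hcorr1' : |∫ ξ in RM..vm, max (deriv f ξ) 0| ≤ (|b 0| + β * μ) * (Z * Δx) :=
        le_trans hcorr1 (mul_le_mul_of_nonneg_left hDRM hB0)
      have hcorr2' : |∫ ξ in RP..vp, max (-(deriv f ξ)) 0| ≤ (|b 0| + β * μ) * (Z * Δx) :=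
        le_trans hcorr2 (mul_le_mul_of_nonneg_left hDRP hB0)
      have htri : ∀ X Y : ℝ, |X - Y| ≤ |X| + |Y| := by
        intro X Y
        rw [sub_eq_add_neg]
        exact (abs_add_le _ _).trans (by rw [abs_neg])
      have hstep : |schemeU f D z u0 ul ur xl Δx Δt m (n+1) j|
          ≤ G n + lam * (2 * ((|b 0| + β * μ) * (Z * Δx))) := by
        rw [hkey]
        have h1 := htri (v0 - lam * ((∫ ξ in vm..v0, max (deriv f ξ) 0)
              + (∫ ξ in vp..v0, max (-(deriv f ξ)) 0)))
          (lam * ((∫ ξ in RM..vm, max (deriv f ξ) 0)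
              + (∫ ξ in RP..vp, max (-(deriv f ξ)) 0)))
        have h2 : |lam * ((∫ ξ in RM..vm, max (deriv f ξ) 0)
              + (∫ ξ in RP..vp, max (-(deriv f ξ)) 0))|
            ≤ lam * (2 * ((|b 0| + β * μ) * (Z * Δx))) := by
          rw [abs_mul, abs_of_nonneg hlam0]
          apply mul_le_mul_of_nonneg_left _ hlam0
          calc |(∫ ξ in RM..vm, max (deriv f ξ) 0)
              + (∫ ξ in RP..vp, max (-(deriv f ξ)) 0)|
              ≤ |∫ ξ in RM..vm, max (deriv f ξ) 0|
                + |∫ ξ in RP..vp, max (-(deriv f ξ)) 0| := abs_add_le _ _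
            _ ≤ 2 * ((|b 0| + β * μ) * (Z * Δx)) := by linarith
        linarith [hconv]
      have hΔx0 : Δx ≠ 0 := ne_of_gt hΔx
      have hc00 : c ≠ 0 := ne_of_gt hc0
      have hexp2 : G n + lam * (2 * ((|b 0| + β * μ) * (Z * Δx)))
          = G n * (1 + κ * Δt) + ρ * Δt := by
        rw [hμ, hκdef, hρdef, hlamdef]
        field_simp
        ring
      have hfin : G n * (1 + κ * Δt) + ρ * Δt ≤ G (n+1) := by
        have hGn1 : G (n+1)
            = (Mc + ρ * ((n:ℝ)+1) * Δt) * ((1 + κ * Δt) ^ n * (1 + κ * Δt)) := by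
          show (Mc + ρ * ((n+1 : ℕ):ℝ) * Δt) * (1 + κ * Δt) ^ (n+1) = _
          rw [pow_succ]; push_cast; ring
        have hGn : G n * (1 + κ * Δt)
            = (Mc + ρ * (n:ℝ) * Δt) * ((1 + κ * Δt) ^ n * (1 + κ * Δt)) := by
          show (Mc + ρ * (n:ℝ) * Δt) * (1 + κ * Δt) ^ n * (1 + κ * Δt) = _
          ring
        have hp2 : 1 ≤ (1 + κ * Δt) ^ n * (1 + κ * Δt) := by
          have h := hGpow (n+1); rwa [pow_succ] at h
        have h3 : ρ * Δt * 1 ≤ ρ * Δt * ((1 + κ * Δt) ^ n * (1 + κ * Δt)) :=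
          mul_le_mul_of_nonneg_left hp2 (mul_nonneg hρ0 hΔt.le)
        rw [hGn, hGn1]
        have h4 : (Mc + ρ * ((n:ℝ)+1) * Δt) * ((1 + κ * Δt) ^ n * (1 + κ * Δt))
            = (Mc + ρ * (n:ℝ) * Δt) * ((1 + κ * Δt) ^ n * (1 + κ * Δt))
              + ρ * Δt * ((1 + κ * Δt) ^ n * (1 + κ * Δt)) := by ring
        rw [h4]
        linarith [h3]
      calc |schemeU f D z u0 ul ur xl Δx Δt m (n+1) j|
          ≤ G n + lam * (2 * ((|b 0| + β * μ) * (Z * Δx))) := hstep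
        _ = G n * (1 + κ * Δt) + ρ * Δt := hexp2
        _ ≤ G (n+1) := hfin
  constructor
  · intro n hn j hj0 hj1
    have h1 := hQ n hn j hj0 hj1
    have h2 := hGC n hn
    linarith
  · intro n hn j hj0 hj1
    have hnT : (n:ℝ) * Δt ≤ T := by nlinarith [Nat.cast_nonneg (α := ℝ) n]
    have hnb : ∀ k : ℤ, |schemeU f D z u0 ul ur xl Δx Δt m n k| ≤ G n := by
      intro k
      by_cases hk : 0 ≤ k ∧ k < (m:ℤ)
      · exact hQ n hnT k hk.1 hk.2
      · exact le_trans (hGhost n hn k (by omega)) (hGM n)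
    have h2 := hGC n hnT
    have hzmb : |zCell z xl Δx m (j-1) - zCell z xl Δx m j| ≤ Z * Δx := by
      have h := hzadj (j-1) (by omega) (by omega)
      rw [show j - 1 + 1 = j from by omega] at h
      rw [abs_sub_comm] at h; exact h
    have hzpb : |zCell z xl Δx m (j+1) - zCell z xl Δx m j| ≤ Z * Δx :=
      hzadj j (by omega) (by omega)
    constructor
    · exact le_trans (hrecon _ _ _ hzmb) (by linarith [hnb (j-1)])
    · exact le_trans (hrecon _ _ _ hzpb) (by linarith [hnb (j+1)])

end
end

section
/- Let f ∈ L¹(ℝ) be such that 0 ≤ sign(ξ) f(ξ) ≤ 1 for all ξ ∈ ℝ, and let h ∈ C²(ℝ) be convex and Lipschitz-continuous. Then h(∫_ℝ f(ξ) dξ) − h(0) ≤ ∫_ℝ h'(ξ) f(ξ) dξ. -/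
open MeasureTheory Set Filter

noncomputable section

lemma chi_eq (s : ℝ) : (fun ξ => chiFun s ξ) =
    (Ioo 0 s).indicator (fun _ => (1:ℝ)) + (Ioo s 0).indicator (fun _ => (-1:ℝ)) := by
  funext ξ
  simp only [chiFun, Pi.add_apply, indicator_apply, mem_Ioo]
  by_cases h1 : 0 < ξ ∧ ξ < s <;> by_cases h2 : s < ξ ∧ ξ < 0 <;>
    simp [h1, h2] <;> try linarith [h1.1, h1.2, h2.1, h2.2]

lemma ind_int (a b : ℝ) (c : ℝ) :
    Integrable ((Ioo a b).indicator (fun _ => c)) :=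
  (integrable_indicator_iff measurableSet_Ioo).2 (integrableOn_const
    measure_Ioo_lt_top.ne enorm_ne_top)

lemma chi_integrable (s : ℝ) : Integrable (fun ξ => chiFun s ξ) := by
  rw [chi_eq]; exact (ind_int _ _ _).add (ind_int _ _ _)

lemma chi_integral (s : ℝ) : ∫ ξ, chiFun s ξ = s := by
  rw [chi_eq, integral_add' (ind_int _ _ _) (ind_int _ _ _),
    integral_indicator_const _ measurableSet_Ioo,
    integral_indicator_const _ measurableSet_Ioo]
  rcases le_or_gt 0 s with hs | hs
  · rw [Ioo_eq_empty (by linarith : ¬ s < 0)]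
    simp [Real.volume_Ioo, ENNReal.toReal_ofReal hs, hs]
  · rw [Ioo_eq_empty (by linarith : ¬ (0:ℝ) < s)]
    simp [Real.volume_Ioo, ENNReal.toReal_ofReal (by linarith : (0:ℝ) ≤ -s), neg_neg,
      max_eq_left (by linarith : (0:ℝ) ≤ -s)]

lemma int_g_chi (g : ℝ → ℝ) (hg : Continuous g) (s : ℝ) :
    ∫ ξ, g ξ * chiFun s ξ = ∫ t in (0:ℝ)..s, g t := by
  have heq : (fun ξ => g ξ * chiFun s ξ) =
      (Ioo 0 s).indicator g + (Ioo s 0).indicator (fun x => -g x) := by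
    funext ξ
    simp only [chiFun, Pi.add_apply, indicator_apply, mem_Ioo]
    by_cases h1 : 0 < ξ ∧ ξ < s <;> by_cases h2 : s < ξ ∧ ξ < 0 <;>
      simp [h1, h2] <;> try linarith [h1.1, h1.2, h2.1, h2.2]
  rw [heq, integral_add' (μ := volume) (f := (Ioo 0 s).indicator g)
    (g := (Ioo s 0).indicator fun x => -g x)
    ((integrable_indicator_iff measurableSet_Ioo).2 (show IntegrableOn g (Ioo 0 s) from hg.integrableOn_Icc.mono_set Ioo_subset_Icc_self))
    ((integrable_indicator_iff measurableSet_Ioo).2 (show IntegrableOn (fun x => -g x) (Ioo s 0) from hg.neg.integrableOn_Icc.mono_set Ioo_subset_Icc_self)),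
    integral_indicator measurableSet_Ioo, integral_indicator measurableSet_Ioo]
  rcases le_or_gt 0 s with hs | hs
  · rw [Ioo_eq_empty (by linarith : ¬ s < 0), intervalIntegral.integral_of_le hs,
      integral_Ioc_eq_integral_Ioo]
    simp
  · rw [Ioo_eq_empty (by linarith : ¬ (0:ℝ) < s),
      intervalIntegral.integral_symm s 0, intervalIntegral.integral_of_le hs.le,
      integral_Ioc_eq_integral_Ioo]
    simp [integral_neg]

/-- Brenier's lemma. -/
theorem brenier_lemma
    (f : ℝ → ℝ) (hfi : Integrable f)
    (hf : ∀ ξ : ℝ, 0 ≤ Real.sign ξ * f ξ ∧ Real.sign ξ * f ξ ≤ 1)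
    (h : ℝ → ℝ) (hh : ContDiff ℝ 2 h) (hconv : ConvexOn ℝ univ h)
    (hlip : ∃ K, LipschitzWith K h) :
    h (∫ ξ, f ξ) - h 0 ≤ ∫ ξ, deriv h ξ * f ξ := by
  obtain ⟨K, hK⟩ := hlip
  have hdiff : Differentiable ℝ h := hh.differentiable two_ne_zero
  have hgc : Continuous (deriv h) := hh.continuous_deriv one_le_two
  set g := deriv h with hgdef
  have hmono : Monotone g := by
    intro a b hab
    exact hconv.monotoneOn_deriv (fun x _ => hdiff x) (mem_univ a) (mem_univ b) hab
  have hbd : ∀ ξ : ℝ, ‖g ξ‖ ≤ K := fun ξ => norm_deriv_le_of_lipschitz hK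
  set S := ∫ ξ, f ξ with hSdef
  set c := g S with hc
  have hgm : AEStronglyMeasurable g volume := hgc.aestronglyMeasurable
  have i1 : Integrable (fun ξ => g ξ * f ξ) := hfi.bdd_mul hgm (Eventually.of_forall hbd)
  have i2 : Integrable (fun ξ => g ξ * chiFun S ξ) := (chi_integrable S).bdd_mul hgm (Eventually.of_forall hbd)
  have i3 : Integrable (fun ξ => c * f ξ) := hfi.const_mul c
  have i4 : Integrable (fun ξ => c * chiFun S ξ) := (chi_integrable S).const_mul c
  have hpt : ∀ᵐ ξ : ℝ, 0 ≤ (g ξ - c) * (f ξ - chiFun S ξ) := by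
    have h0 : ∀ᵐ ξ : ℝ, ξ ≠ (0:ℝ) := by
      rw [ae_iff]
      simpa [Set.setOf_eq_eq_singleton, not_not] using measure_singleton (0:ℝ)
    filter_upwards [h0] with ξ hξ
    rcases lt_or_gt_of_ne hξ with hneg | hpos
    · have hs := hf ξ
      rw [Real.sign_of_neg hneg] at hs
      by_cases hS1 : S < ξ
      · have hchi : chiFun S ξ = -1 := by
          rw [chiFun, if_neg (by push_neg; intro h'; linarith), if_pos ⟨hS1, hneg⟩]
        rw [hchi]
        exact mul_nonneg (sub_nonneg.2 (hmono hS1.le)) (by linarith [hs.2])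
      · have hchi : chiFun S ξ = 0 := by
          rw [chiFun, if_neg (by push_neg; intro h'; linarith),
            if_neg (by push_neg; intro h'; exact absurd h' hS1)]
        rw [hchi]
        nlinarith [sub_nonpos.2 (hmono (not_lt.1 hS1) : g ξ ≤ g S), hs.1]
    · have hs := hf ξ
      rw [Real.sign_of_pos hpos] at hs
      by_cases hS1 : ξ < S
      · have hchi : chiFun S ξ = 1 := by
          rw [chiFun, if_pos ⟨hpos, hS1⟩]
        rw [hchi]
        nlinarith [sub_nonpos.2 (hmono hS1.le : g ξ ≤ g S), hs.2]
      · have hchi : chiFun S ξ = 0 := by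
          rw [chiFun, if_neg (by push_neg; intro h'; exact not_lt.1 hS1),
            if_neg (by push_neg; intro h'; linarith)]
        rw [hchi]
        exact mul_nonneg (sub_nonneg.2 (hmono (not_lt.1 hS1))) (by linarith [hs.1])
  have key : 0 ≤ ∫ ξ, (g ξ - c) * (f ξ - chiFun S ξ) := integral_nonneg_of_ae hpt
  have hexp : (fun ξ => (g ξ - c) * (f ξ - chiFun S ξ)) =
      fun ξ => (g ξ * f ξ - g ξ * chiFun S ξ) - (c * f ξ - c * chiFun S ξ) := by
    funext ξ; ring
  have i12 : Integrable (fun ξ => g ξ * f ξ - g ξ * chiFun S ξ) := i1.sub i2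
  have i34 : Integrable (fun ξ => c * f ξ - c * chiFun S ξ) := i3.sub i4
  rw [hexp, integral_sub i12 i34, integral_sub i1 i2, integral_sub i3 i4,
    integral_const_mul, integral_const_mul, chi_integral, int_g_chi g hgc S] at key
  have ftc : ∫ t in (0:ℝ)..S, g t = h S - h 0 :=
    intervalIntegral.integral_deriv_eq_sub (fun x _ => hdiff x) (hgc.intervalIntegrable 0 S)
  rw [ftc, ← hSdef] at key
  linarith


end
end

section
/- Let f ∈ C²(ℝ), C > 0, K := [−C, C], u, v, w ∈ K, let (η, q) be an entropy pair, and assume the CFL condition ‖f'‖_{L^∞(K)} · Δt/Δx ≤ 1. Then the numerical entropy flux G(u,v) := ∫₀^u η'(ξ) f'⁺(ξ) dξ − ∫₀^v η'(ξ) f'⁻(ξ) dξ + q(0) is consistent (G(s,s) = q(s) for all s ∈ ℝ) and satisfies the cell entropy inequality η(H(u,v,w)) − η(v) + (Δt/Δx)(G(v,w) − G(u,v)) ≤ 0. -/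
open MeasureTheory Set Filter

noncomputable section

private lemma chiFun_mul_eq_indicator (g : ℝ → ℝ) (s : ℝ) :
    (fun ξ => g ξ * chiFun s ξ)
      = fun ξ => (Ioo (0:ℝ) s).indicator g ξ - (Ioo s (0:ℝ)).indicator g ξ := by
  funext ξ
  simp only [chiFun, indicator, mem_Ioo]
  split_ifs with h1 h2
  · linarith [h1.1, h2.2]
  · ring
  · ring
  · ring

private lemma integrable_mul_chiFun {g : ℝ → ℝ} (hg : Continuous g) (s : ℝ) :
    Integrable (fun ξ => g ξ * chiFun s ξ) := by
  rw [chiFun_mul_eq_indicator]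
  have h1 : IntegrableOn g (Ioo (0:ℝ) s) :=
    (hg.integrableOn_Icc).mono_set Ioo_subset_Icc_self
  have h2 : IntegrableOn g (Ioo s (0:ℝ)) :=
    (hg.integrableOn_Icc).mono_set Ioo_subset_Icc_self
  exact ((integrable_indicator_iff measurableSet_Ioo).2 h1).sub
    ((integrable_indicator_iff measurableSet_Ioo).2 h2)

private lemma integral_mul_chiFun {g : ℝ → ℝ} (hg : Continuous g) (s : ℝ) :
    ∫ ξ, g ξ * chiFun s ξ = ∫ ξ in (0:ℝ)..s, g ξ := by
  have h1 : IntegrableOn g (Ioo (0:ℝ) s) :=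
    (hg.integrableOn_Icc).mono_set Ioo_subset_Icc_self
  have h2 : IntegrableOn g (Ioo s (0:ℝ)) :=
    (hg.integrableOn_Icc).mono_set Ioo_subset_Icc_self
  rw [chiFun_mul_eq_indicator,
    integral_sub ((integrable_indicator_iff measurableSet_Ioo).2 h1)
      ((integrable_indicator_iff measurableSet_Ioo).2 h2),
    integral_indicator measurableSet_Ioo, integral_indicator measurableSet_Ioo]
  rcases le_total (0:ℝ) s with h | h
  · rw [intervalIntegral.integral_of_le h, integral_Ioc_eq_integral_Ioo,
      Ioo_eq_empty (not_lt.2 h)]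
    simp
  · rw [intervalIntegral.integral_of_ge h, integral_Ioc_eq_integral_Ioo,
      Ioo_eq_empty (not_lt.2 h)]
    simp

private lemma chiFun_of_pos {ξ : ℝ} (hξ : 0 < ξ) (s : ℝ) :
    chiFun s ξ = if ξ < s then 1 else 0 := by
  unfold chiFun
  rcases lt_or_ge ξ s with h | h
  · rw [if_pos ⟨hξ, h⟩, if_pos h]
  · rw [if_neg (fun hc => absurd hc.2 (not_lt.2 h)),
      if_neg (fun hc => absurd hξ (not_lt.2 hc.2.le)), if_neg (not_lt.2 h)]

private lemma chiFun_of_neg {ξ : ℝ} (hξ : ξ < 0) (s : ℝ) :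
    chiFun s ξ = if s < ξ then -1 else 0 := by
  unfold chiFun
  rcases lt_or_ge s ξ with h | h
  · rw [if_neg (fun hc => absurd hξ (not_lt.2 hc.1.le)), if_pos ⟨h, hξ⟩, if_pos h]
  · rw [if_neg (fun hc => absurd hξ (not_lt.2 hc.1.le)),
      if_neg (fun hc => absurd hc.1 (not_lt.2 h)), if_neg (not_lt.2 h)]

private lemma chiFun_at_zero (s : ℝ) : chiFun s 0 = 0 := by
  unfold chiFun
  rw [if_neg (fun hc => lt_irrefl 0 hc.1), if_neg (fun hc => lt_irrefl 0 hc.2)]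

/-- the numerical entropy flux `G` is consistent and the
cell entropy inequality holds for the Engquist-Osher scheme. -/
theorem cell_entropy_inequality
    (f : ℝ → ℝ) (hf : ContDiff ℝ 2 f)
    (C : ℝ) (hC : 0 < C)
    (Δx Δt : ℝ) (hΔx : 0 < Δx) (hΔt : 0 < Δt)
    (u v w : ℝ) (hu : u ∈ Icc (-C) C) (hv : v ∈ Icc (-C) C) (hw : w ∈ Icc (-C) C)
    (η q : ℝ → ℝ) (hηq : IsEntropyPair f η q)
    (hCFL : sSup ((fun ξ => |deriv f ξ|) '' Icc (-C) C) * (Δt / Δx) ≤ 1) :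
    (∀ s : ℝ, GFlux f η q s s = q s) ∧
    η (HEO f Δx Δt u v w) - η v
      + Δt / Δx * (GFlux f η q v w - GFlux f η q u v) ≤ 0 := by
  obtain ⟨hη2, hηconv, hq1, hpair⟩ := hηq
  have hf'c : Continuous (deriv f) := hf.continuous_deriv (by norm_num)
  have hθc : Continuous (deriv η) := hη2.continuous_deriv (by norm_num)
  have hηdiff : Differentiable ℝ η := hη2.differentiable (by norm_num)
  have hqdiff : Differentiable ℝ q := hq1.differentiable (by norm_num)
  have hq'c : Continuous (deriv q) := hq1.continuous_deriv le_rfl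
  have hθmono : Monotone (deriv η) :=
    monotoneOn_univ.1 (hηconv.monotoneOn_deriv (fun x _ => hηdiff x))
  have hfpc : Continuous fun ξ => max (deriv f ξ) 0 := hf'c.max continuous_const
  have hfmc : Continuous fun ξ => max (-(deriv f ξ)) 0 := hf'c.neg.max continuous_const
  have ftcη : ∀ a : ℝ, ∫ ξ in (0:ℝ)..a, deriv η ξ = η a - η 0 := fun a =>
    intervalIntegral.integral_deriv_eq_sub (fun x _ => hηdiff x)
      (hθc.intervalIntegrable _ _)
  have consist : ∀ s : ℝ, GFlux f η q s s = q s := by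
    intro s
    unfold GFlux
    rw [← intervalIntegral.integral_sub (f := fun ξ => deriv η ξ * max (deriv f ξ) 0)
        (g := fun ξ => deriv η ξ * max (-(deriv f ξ)) 0) ((hθc.mul hfpc).intervalIntegrable _ _)
        ((hθc.mul hfmc).intervalIntegrable _ _)]
    have e : ∀ ξ ∈ uIcc (0:ℝ) s,
        deriv η ξ * max (deriv f ξ) 0 - deriv η ξ * max (-(deriv f ξ)) 0 = deriv q ξ := by
      intro ξ _
      rw [← mul_sub, max_zero_sub_max_neg_zero_eq_self]
      exact (hpair ξ).symm
    rw [intervalIntegral.integral_congr e,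
      intervalIntegral.integral_deriv_eq_sub (fun x _ => hqdiff x)
        (hq'c.intervalIntegrable _ _)]
    ring
  refine ⟨consist, ?_⟩
  set L := Δt / Δx with hLdef
  have hL0 : 0 ≤ L := le_of_lt (div_pos hΔt hΔx)
  set M := sSup ((fun ξ => |deriv f ξ|) '' Icc (-C) C) with hMdef
  have hbdd : BddAbove ((fun ξ => |deriv f ξ|) '' Icc (-C) C) :=
    (isCompact_Icc.image_of_continuousOn hf'c.abs.continuousOn).bddAbove
  have hMle : ∀ ξ ∈ Icc (-C) C, |deriv f ξ| ≤ M := fun ξ hξ => le_csSup hbdd ⟨ξ, hξ, rfl⟩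
  set c1 : ℝ → ℝ := fun ξ => 1 - L * |deriv f ξ| with hc1def
  set c2 : ℝ → ℝ := fun ξ => L * max (deriv f ξ) 0 with hc2def
  set c3 : ℝ → ℝ := fun ξ => L * max (-(deriv f ξ)) 0 with hc3def
  have hc1c : Continuous c1 := continuous_const.sub (continuous_const.mul hf'c.abs)
  have hc2c : Continuous c2 := continuous_const.mul hfpc
  have hc3c : Continuous c3 := continuous_const.mul hfmc
  have hc2n : ∀ ξ, 0 ≤ c2 ξ := fun ξ => mul_nonneg hL0 (le_max_right _ _)
  have hc3n : ∀ ξ, 0 ≤ c3 ξ := fun ξ => mul_nonneg hL0 (le_max_right _ _)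
  have hsum : ∀ ξ, c1 ξ + c2 ξ + c3 ξ = 1 := by
    intro ξ
    simp only [hc1def, hc2def, hc3def]
    rw [← max_zero_add_max_neg_zero_eq_abs_self (deriv f ξ)]
    ring
  have hc1n : ∀ ξ : ℝ, -C ≤ ξ → ξ ≤ C → 0 ≤ c1 ξ := by
    intro ξ hl hr
    have hξ : ξ ∈ Icc (-C) C := mem_Icc.mpr ⟨hl, hr⟩
    have h1 : L * |deriv f ξ| ≤ L * M := mul_le_mul_of_nonneg_left (hMle ξ hξ) hL0
    have h2 : M * L ≤ 1 := hCFL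
    simp only [hc1def]
    nlinarith [mul_comm L M]
  set h : ℝ → ℝ := fun ξ => c1 ξ * chiFun v ξ + c2 ξ * chiFun u ξ + c3 ξ * chiFun w ξ
    with hhdef
  set H := HEO f Δx Δt u v w with hHdef
  -- pointwise bounds on h
  have hb : ∀ ξ : ℝ, (0 < ξ → 0 ≤ h ξ ∧ h ξ ≤ 1) ∧ (ξ < 0 → -1 ≤ h ξ ∧ h ξ ≤ 0) := by
    intro ξ
    constructor
    · intro hξ
      simp only [hhdef, chiFun_of_pos hξ]
      by_cases hv' : ξ < v <;> by_cases hu' : ξ < u <;> by_cases hw' : ξ < w <;>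
        simp only [hv', hu', hw', if_true, if_false, mul_one, mul_zero, add_zero, zero_add] <;>
        first
        | (refine ⟨?_, ?_⟩ <;>
            linarith [hc1n ξ (by linarith) (by linarith [hv.2, hu.2, hw.2]),
              hc2n ξ, hc3n ξ, hsum ξ])
        | norm_num
    · intro hξ
      simp only [hhdef, chiFun_of_neg hξ]
      by_cases hv' : v < ξ <;> by_cases hu' : u < ξ <;> by_cases hw' : w < ξ <;>
        simp only [hv', hu', hw', if_true, if_false, mul_neg, mul_one, mul_zero,
          add_zero, zero_add] <;>
        first
        | (refine ⟨?_, ?_⟩ <;>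
            linarith [hc1n ξ (by linarith [hv.1, hu.1, hw.1]) (by linarith),
              hc2n ξ, hc3n ξ, hsum ξ])
        | norm_num
  have hh0 : h 0 = 0 := by
    simp only [hhdef, chiFun_at_zero, mul_zero, add_zero]
  -- master integral identity
  have keyInt : ∀ g : ℝ → ℝ, Continuous g →
      (Integrable fun ξ => g ξ * h ξ) ∧
      ∫ ξ, g ξ * h ξ
        = (∫ ξ in (0:ℝ)..v, g ξ)
          - L * (∫ ξ in (0:ℝ)..v, g ξ * max (deriv f ξ) 0)
          - L * (∫ ξ in (0:ℝ)..v, g ξ * max (-(deriv f ξ)) 0)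
          + L * (∫ ξ in (0:ℝ)..u, g ξ * max (deriv f ξ) 0)
          + L * (∫ ξ in (0:ℝ)..w, g ξ * max (-(deriv f ξ)) 0) := by
    intro g hg
    have hrepr : (fun ξ => g ξ * h ξ)
        = fun ξ => g ξ * c1 ξ * chiFun v ξ
            + g ξ * c2 ξ * chiFun u ξ
            + g ξ * c3 ξ * chiFun w ξ := by
      funext ξ; simp only [hhdef]; ring
    have i1 : Integrable fun ξ => g ξ * c1 ξ * chiFun v ξ :=
      integrable_mul_chiFun (hg.mul hc1c) v
    have i2 : Integrable fun ξ => g ξ * c2 ξ * chiFun u ξ :=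
      integrable_mul_chiFun (hg.mul hc2c) u
    have i3 : Integrable fun ξ => g ξ * c3 ξ * chiFun w ξ :=
      integrable_mul_chiFun (hg.mul hc3c) w
    have i12 : Integrable fun ξ => g ξ * c1 ξ * chiFun v ξ + g ξ * c2 ξ * chiFun u ξ :=
      i1.add i2
    have i123 : Integrable fun ξ =>
        g ξ * c1 ξ * chiFun v ξ + g ξ * c2 ξ * chiFun u ξ + g ξ * c3 ξ * chiFun w ξ :=
      i12.add i3
    constructor
    · rw [hrepr]; exact i123
    · rw [hrepr, integral_add i12 i3, integral_add i1 i2,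
        integral_mul_chiFun (g := fun ξ => g ξ * c1 ξ) (hg.mul hc1c),
        integral_mul_chiFun (g := fun ξ => g ξ * c2 ξ) (hg.mul hc2c),
        integral_mul_chiFun (g := fun ξ => g ξ * c3 ξ) (hg.mul hc3c)]
      have e1 : ∀ ξ ∈ uIcc (0:ℝ) v, g ξ * c1 ξ
          = g ξ - L * (g ξ * max (deriv f ξ) 0) - L * (g ξ * max (-(deriv f ξ)) 0) := by
        intro ξ _
        simp only [hc1def]
        rw [← max_zero_add_max_neg_zero_eq_abs_self (deriv f ξ)]
        ring
      have e2 : ∀ ξ ∈ uIcc (0:ℝ) u, g ξ * c2 ξ = L * (g ξ * max (deriv f ξ) 0) := by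
        intro ξ _; simp only [hc2def]; ring
      have e3 : ∀ ξ ∈ uIcc (0:ℝ) w, g ξ * c3 ξ = L * (g ξ * max (-(deriv f ξ)) 0) := by
        intro ξ _; simp only [hc3def]; ring
      rw [intervalIntegral.integral_congr e1, intervalIntegral.integral_congr e2,
        intervalIntegral.integral_congr e3,
        intervalIntegral.integral_sub (f := fun x => g x - L * (g x * max (deriv f x) 0))
          (g := fun x => L * (g x * max (-(deriv f x)) 0))
          ((hg.sub (continuous_const.mul (hg.mul hfpc))).intervalIntegrable _ _)
          ((continuous_const.mul (hg.mul hfmc)).intervalIntegrable _ _),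
        intervalIntegral.integral_sub (f := fun x => g x)
          (g := fun x => L * (g x * max (deriv f x) 0)) (hg.intervalIntegrable _ _)
          ((continuous_const.mul (hg.mul hfpc)).intervalIntegrable _ _),
        intervalIntegral.integral_const_mul, intervalIntegral.integral_const_mul,
        intervalIntegral.integral_const_mul, intervalIntegral.integral_const_mul]
      try ring
  have hint_h : Integrable h := by
    have := (keyInt (fun _ => 1) continuous_const).1
    simpa using this
  have hI1 : ∫ ξ, h ξ = H := by
    have h1 := (keyInt (fun _ => 1) continuous_const).2
    simp only [one_mul] at h1
    rw [h1, intervalIntegral.integral_const, smul_eq_mul, mul_one, hHdef]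
    unfold HEO eoFlux
    rw [hLdef]
    ring
  have hI2 : ∫ ξ, deriv η ξ * h ξ
      = (η v - η 0) - L * (GFlux f η q v w - GFlux f η q u v) := by
    rw [(keyInt (deriv η) hθc).2, ftcη v]
    unfold GFlux
    ring
  have hIθH : ∫ ξ, deriv η ξ * chiFun H ξ = η H - η 0 := by
    rw [integral_mul_chiFun hθc]; exact ftcη H
  have hintθχ : Integrable fun ξ => deriv η ξ * chiFun H ξ := integrable_mul_chiFun hθc H
  have hintθh : Integrable fun ξ => deriv η ξ * h ξ := (keyInt (deriv η) hθc).1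
  have hEq : η H - η v + L * (GFlux f η q v w - GFlux f η q u v)
      = ∫ ξ, (deriv η ξ * chiFun H ξ - deriv η ξ * h ξ) := by
    rw [integral_sub hintθχ hintθh, hIθH, hI2]; ring
  have hintA : Integrable fun ξ => (deriv η ξ - deriv η H) * (chiFun H ξ - h ξ) := by
    have j1 : Integrable fun ξ => (deriv η ξ - deriv η H) * chiFun H ξ :=
      integrable_mul_chiFun (hθc.sub continuous_const) H
    have j2 : Integrable fun ξ => (deriv η ξ - deriv η H) * h ξ :=
      (keyInt (fun ρ => deriv η ρ - deriv η H) (hθc.sub continuous_const)).1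
    have hrepr : (fun ξ => (deriv η ξ - deriv η H) * (chiFun H ξ - h ξ))
        = fun ξ => (deriv η ξ - deriv η H) * chiFun H ξ
            - (deriv η ξ - deriv η H) * h ξ := by
      funext ξ; ring
    rw [hrepr]
    exact j1.sub j2
  have hintB : Integrable fun ξ => deriv η H * chiFun H ξ - deriv η H * h ξ :=
    (integrable_mul_chiFun continuous_const H).sub (hint_h.const_mul _)
  have hIB : ∫ ξ, (deriv η H * chiFun H ξ - deriv η H * h ξ) = 0 := by
    rw [integral_sub (integrable_mul_chiFun continuous_const H) (hint_h.const_mul _),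
      integral_mul_chiFun continuous_const H, integral_const_mul, hI1,
      intervalIntegral.integral_const, smul_eq_mul, sub_zero]
    ring
  have hsign : ∀ ξ : ℝ, (deriv η ξ - deriv η H) * (chiFun H ξ - h ξ) ≤ 0 := by
    intro ξ
    rcases lt_trichotomy ξ H with hlt | heq | hgt
    · refine mul_nonpos_iff.2 (Or.inr ⟨sub_nonpos.2 (hθmono hlt.le), sub_nonneg.2 ?_⟩)
      rcases lt_trichotomy ξ 0 with h0 | h0 | h0
      · rw [chiFun_of_neg h0, if_neg (not_lt.2 hlt.le)]
        exact ((hb ξ).2 h0).2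
      · rw [h0, chiFun_at_zero, hh0]
      · rw [chiFun_of_pos h0, if_pos hlt]
        exact ((hb ξ).1 h0).2
    · rw [heq, sub_self, zero_mul]
    · refine mul_nonpos_iff.2 (Or.inl ⟨sub_nonneg.2 (hθmono hgt.le), sub_nonpos.2 ?_⟩)
      rcases lt_trichotomy ξ 0 with h0 | h0 | h0
      · rw [chiFun_of_neg h0, if_pos hgt]
        exact ((hb ξ).2 h0).1
      · rw [h0, chiFun_at_zero, hh0]
      · rw [chiFun_of_pos h0, if_neg (not_lt.2 hgt.le)]
        exact ((hb ξ).1 h0).1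
  have hsplitfun : (fun ξ => deriv η ξ * chiFun H ξ - deriv η ξ * h ξ)
      = fun ξ => (deriv η ξ - deriv η H) * (chiFun H ξ - h ξ)
          + (deriv η H * chiFun H ξ - deriv η H * h ξ) := by
    funext ξ; ring
  rw [hEq, hsplitfun, integral_add hintA hintB, hIB, add_zero]
  exact integral_nonpos fun ξ => hsign ξ

end
end

section
/- Let f ∈ C²(ℝ), let (η, q) be a boundary entropy pair and w ∈ ℝ with η(w) = η'(w) = q(w) = 0, and let G(u,v) := ∫₀^u η'(ξ) f'⁺(ξ) dξ − ∫₀^v η'(ξ) f'⁻(ξ) dξ + q(0). Then for all u, v ∈ ℝ: G(u,v) = ∫_w^u η'(ξ) f'⁺(ξ) dξ − ∫_w^v η'(ξ) f'⁻(ξ) dξ. If moreover u, v, w ∈ [−C, C] for some C > 0, then −Lip_{[-C,C]}(f) · η(v) ≤ G(u,v) ≤ Lip_{[-C,C]}(f) · η(u). -/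
open MeasureTheory Set Filter

noncomputable section

open Topology in
private lemma max_sub_max_neg (a : ℝ) : max a 0 - max (-a) 0 = a := by
  rcases le_total a 0 with h | h
  · rw [max_eq_right h, max_eq_left (neg_nonneg.2 h)]; ring
  · rw [max_eq_left h, max_eq_right (neg_nonpos.2 h)]; ring

open Topology in
private lemma abs_deriv_le_lipOn {f : ℝ → ℝ} (hf : ContDiff ℝ 2 f) {C : ℝ} (hC : 0 < C)
    {ξ : ℝ} (hξ : ξ ∈ Icc (-C) C) : |deriv f ξ| ≤ lipOn f C := by
  have hdf : Differentiable ℝ f := hf.differentiable (by norm_num)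
  have hcd : Continuous (deriv f) := hf.continuous_deriv (by norm_num)
  obtain ⟨K, hK⟩ := IsCompact.exists_bound_of_continuousOn (isCompact_Icc (a := -C) (b := C))
    hcd.continuousOn
  have hbdd : BddAbove {L : ℝ | ∃ u ∈ Icc (-C) C, ∃ v ∈ Icc (-C) C,
      u ≠ v ∧ L = |f u - f v| / |u - v|} := by
    refine ⟨K, ?_⟩
    rintro L ⟨u, hu, v, hv, huv, rfl⟩
    have h1 : ‖f u - f v‖ ≤ K * ‖u - v‖ :=
      Convex.norm_image_sub_le_of_norm_deriv_le (fun x _ => hdf.differentiableAt)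
        hK (convex_Icc _ _) hv hu
    have h2 : (0:ℝ) < |u - v| := abs_pos.2 (sub_ne_zero.2 huv)
    rw [div_le_iff₀ h2]
    simpa [Real.norm_eq_abs] using h1
  have hmem : ∀ y ∈ Icc (-C) C, y ≠ ξ → |slope f ξ y| ≤ lipOn f C := by
    intro y hy hne
    refine le_csSup hbdd ⟨y, hy, ξ, hξ, hne, ?_⟩
    rw [slope_def_field, abs_div]
  have hd := hasDerivAt_iff_tendsto_slope.mp (hdf.differentiableAt (x := ξ)).hasDerivAt
  rcases lt_or_eq_of_le hξ.2 with hlt | heq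
  · have hle : 𝓝[>] ξ ≤ 𝓝[≠] ξ :=
      nhdsWithin_mono ξ fun y hy => Set.mem_compl_singleton_iff.mpr (ne_of_gt hy)
    refine le_of_tendsto ((hd.mono_left hle).abs) ?_
    filter_upwards [Ioc_mem_nhdsGT_of_mem ⟨le_refl ξ, hlt⟩] with y hy
    exact hmem y ⟨le_trans hξ.1 hy.1.le, hy.2⟩ (ne_of_gt hy.1)
  · have hlo : -C < ξ := by rw [← heq]; linarith
    have hle : 𝓝[<] ξ ≤ 𝓝[≠] ξ :=
      nhdsWithin_mono ξ fun y hy => Set.mem_compl_singleton_iff.mpr (ne_of_lt hy)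
    refine le_of_tendsto ((hd.mono_left hle).abs) ?_
    filter_upwards [Ico_mem_nhdsLT_of_mem ⟨hlo, le_refl ξ⟩] with y hy
    exact hmem y ⟨hy.1, le_trans hy.2.le hξ.2⟩ (ne_of_lt hy.2)

private lemma deriv_nonneg_of_convexOn {η : ℝ → ℝ} (hη : ContDiff ℝ 2 η)
    (hconv : ConvexOn ℝ univ η) {w ξ : ℝ} (hw : deriv η w = 0) (h : w ≤ ξ) :
    0 ≤ deriv η ξ := by
  rcases eq_or_lt_of_le h with rfl | h
  · exact le_of_eq hw.symm
  · have hd : Differentiable ℝ η := hη.differentiable (by norm_num)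
    have h1 := hconv.deriv_le_slope (mem_univ w) (mem_univ ξ) h (hd w)
    have h2 := hconv.slope_le_deriv (mem_univ w) (mem_univ ξ) h (hd ξ)
    rw [hw] at h1
    exact le_trans h1 h2

private lemma deriv_nonpos_of_convexOn {η : ℝ → ℝ} (hη : ContDiff ℝ 2 η)
    (hconv : ConvexOn ℝ univ η) {w ξ : ℝ} (hw : deriv η w = 0) (h : ξ ≤ w) :
    deriv η ξ ≤ 0 := by
  rcases eq_or_lt_of_le h with rfl | h
  · exact le_of_eq hw
  · have hd : Differentiable ℝ η := hη.differentiable (by norm_num)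
    have h1 := hconv.deriv_le_slope (mem_univ ξ) (mem_univ w) h (hd ξ)
    have h2 := hconv.slope_le_deriv (mem_univ ξ) (mem_univ w) h (hd w)
    rw [hw] at h2
    exact le_trans h1 h2

private lemma key_int {η : ℝ → ℝ} (hη : ContDiff ℝ 2 η) (hconv : ConvexOn ℝ univ η)
    {w : ℝ} (hw0 : η w = 0) (hw1 : deriv η w = 0)
    (g : ℝ → ℝ) (hgc : Continuous g) (hg0 : ∀ ξ, 0 ≤ g ξ)
    {C L u : ℝ} (hbd : ∀ ξ ∈ Icc (-C) C, g ξ ≤ L)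
    (hu : u ∈ Icc (-C) C) (hw : w ∈ Icc (-C) C) :
    0 ≤ (∫ ξ in w..u, deriv η ξ * g ξ) ∧ (∫ ξ in w..u, deriv η ξ * g ξ) ≤ L * η u := by
  have hηd : Differentiable ℝ η := hη.differentiable (by norm_num)
  have hηc : Continuous (deriv η) := hη.continuous_deriv (by norm_num)
  have hint1 : ∀ a b : ℝ, IntervalIntegrable (fun ξ => deriv η ξ * g ξ) volume a b :=
    fun a b => (hηc.mul hgc).intervalIntegrable a b
  have hint2 : ∀ a b : ℝ, IntervalIntegrable (fun ξ => L * deriv η ξ) volume a b :=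
    fun a b => (continuous_const.mul hηc).intervalIntegrable a b
  rcases le_total w u with h | h
  · constructor
    · apply intervalIntegral.integral_nonneg h
      intro ξ hξ
      exact mul_nonneg (deriv_nonneg_of_convexOn hη hconv hw1 hξ.1) (hg0 ξ)
    · calc (∫ ξ in w..u, deriv η ξ * g ξ) ≤ ∫ ξ in w..u, L * deriv η ξ := by
            apply intervalIntegral.integral_mono_on h (hint1 w u) (hint2 w u)
            intro ξ hξ
            have h1 : 0 ≤ deriv η ξ := deriv_nonneg_of_convexOn hη hconv hw1 hξ.1
            have h2 : g ξ ≤ L := hbd ξ ⟨le_trans hw.1 hξ.1, le_trans hξ.2 hu.2⟩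
            calc deriv η ξ * g ξ ≤ deriv η ξ * L := mul_le_mul_of_nonneg_left h2 h1
              _ = L * deriv η ξ := mul_comm _ _
        _ = L * (η u - η w) := by
            rw [intervalIntegral.integral_const_mul,
              intervalIntegral.integral_deriv_eq_sub (fun x _ => (hηd x))
                (hηc.intervalIntegrable w u)]
        _ = L * η u := by rw [hw0]; ring
  · rw [intervalIntegral.integral_symm u w]
    have hlow : (∫ ξ in u..w, L * deriv η ξ) ≤ ∫ ξ in u..w, deriv η ξ * g ξ := by
      apply intervalIntegral.integral_mono_on h (hint2 u w) (hint1 u w)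
      intro ξ hξ
      have h1 : deriv η ξ ≤ 0 := deriv_nonpos_of_convexOn hη hconv hw1 hξ.2
      have h2 : g ξ ≤ L := hbd ξ ⟨le_trans hu.1 hξ.1, le_trans hξ.2 hw.2⟩
      calc L * deriv η ξ = deriv η ξ * L := mul_comm _ _
        _ ≤ deriv η ξ * g ξ := mul_le_mul_of_nonpos_left h2 h1
    have heval : (∫ ξ in u..w, L * deriv η ξ) = L * (η w - η u) := by
      rw [intervalIntegral.integral_const_mul,
        intervalIntegral.integral_deriv_eq_sub (fun x _ => (hηd x))
          (hηc.intervalIntegrable u w)]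
    have hup : (∫ ξ in u..w, deriv η ξ * g ξ) ≤ 0 := by
      have : (∫ ξ in u..w, deriv η ξ * g ξ) ≤ ∫ ξ in u..w, (0:ℝ) := by
        apply intervalIntegral.integral_mono_on h (hint1 u w)
          (continuous_const.intervalIntegrable u w)
        intro ξ hξ
        exact mul_nonpos_of_nonpos_of_nonneg
          (deriv_nonpos_of_convexOn hη hconv hw1 hξ.2) (hg0 ξ)
      simpa using this
    constructor
    · linarith
    · rw [heval, hw0] at hlow
      linarith


/-- representation and bounds for the numerical entropy flux
associated with a boundary entropy pair. -/
theorem numerical_entropy_flux_bounds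
    (f : ℝ → ℝ) (hf : ContDiff ℝ 2 f)
    (η q : ℝ → ℝ) (hηq : IsBoundaryEntropyPair f η q)
    (w : ℝ) (hw0 : η w = 0) (hw1 : deriv η w = 0) (hw2 : q w = 0) :
    (∀ u v : ℝ, GFlux f η q u v =
        (∫ ξ in w..u, deriv η ξ * max (deriv f ξ) 0)
          - ∫ ξ in w..v, deriv η ξ * max (-(deriv f ξ)) 0) ∧
    (∀ C : ℝ, 0 < C → ∀ u v : ℝ,
        u ∈ Icc (-C) C → v ∈ Icc (-C) C → w ∈ Icc (-C) C →
        -(lipOn f C * η v) ≤ GFlux f η q u v ∧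
          GFlux f η q u v ≤ lipOn f C * η u) := by
  obtain ⟨⟨hη2, hconv, hq1, hqd⟩, -⟩ := hηq
  have hηd : Differentiable ℝ η := hη2.differentiable (by norm_num)
  have hηc : Continuous (deriv η) := hη2.continuous_deriv (by norm_num)
  have hfc : Continuous (deriv f) := hf.continuous_deriv (by norm_num)
  have hgPc : Continuous fun ξ => deriv η ξ * max (deriv f ξ) 0 :=
    hηc.mul (hfc.max continuous_const)
  have hgNc : Continuous fun ξ => deriv η ξ * max (-(deriv f ξ)) 0 :=
    hηc.mul (hfc.neg.max continuous_const)
  have hq0 : q 0 = (∫ ξ in w..(0:ℝ), deriv η ξ * max (deriv f ξ) 0)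
      - ∫ ξ in w..(0:ℝ), deriv η ξ * max (-(deriv f ξ)) 0 := by
    have h1 : (∫ ξ in w..(0:ℝ), deriv q ξ) = q 0 - q w :=
      intervalIntegral.integral_deriv_eq_sub (fun x _ => hq1.differentiable one_ne_zero x)
        ((hq1.continuous_deriv le_rfl).intervalIntegrable _ _)
    have h2 : (∫ ξ in w..(0:ℝ), deriv q ξ)
        = ∫ ξ in w..(0:ℝ), (deriv η ξ * max (deriv f ξ) 0
            - deriv η ξ * max (-(deriv f ξ)) 0) := by
      apply intervalIntegral.integral_congr
      intro ξ _
      dsimp only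
      rw [hqd ξ, ← mul_sub, max_sub_max_neg]
    rw [h2, intervalIntegral.integral_sub (hgPc.intervalIntegrable _ _)
      (hgNc.intervalIntegrable _ _)] at h1
    rw [hw2] at h1
    linarith
  have hrep : ∀ u v : ℝ, GFlux f η q u v =
      (∫ ξ in w..u, deriv η ξ * max (deriv f ξ) 0)
        - ∫ ξ in w..v, deriv η ξ * max (-(deriv f ξ)) 0 := by
    intro u v
    have hP := intervalIntegral.integral_add_adjacent_intervals (μ := volume) (a := w) (b := 0) (c := u)
      (hgPc.intervalIntegrable _ _) (hgPc.intervalIntegrable _ _)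
    have hN := intervalIntegral.integral_add_adjacent_intervals (μ := volume) (a := w) (b := 0) (c := v)
      (hgNc.intervalIntegrable _ _) (hgNc.intervalIntegrable _ _)
    unfold GFlux
    rw [hq0]
    linarith
  refine ⟨hrep, ?_⟩
  intro C hC u v hu hv hwC
  have habs : ∀ ξ ∈ Icc (-C) C, |deriv f ξ| ≤ lipOn f C := fun ξ hξ =>
    abs_deriv_le_lipOn hf hC hξ
  have hLP : ∀ ξ ∈ Icc (-C) C, max (deriv f ξ) 0 ≤ lipOn f C := fun ξ hξ =>
    max_le (le_trans (le_abs_self _) (habs ξ hξ)) (le_trans (abs_nonneg _) (habs ξ hξ))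
  have hLN : ∀ ξ ∈ Icc (-C) C, max (-(deriv f ξ)) 0 ≤ lipOn f C := fun ξ hξ =>
    max_le (le_trans (neg_le_abs _) (habs ξ hξ)) (le_trans (abs_nonneg _) (habs ξ hξ))
  have hA := key_int hη2 hconv hw0 hw1 (fun ξ => max (deriv f ξ) 0)
    (hfc.max continuous_const) (fun ξ => le_max_right _ _) hLP hu hwC
  have hB := key_int hη2 hconv hw0 hw1 (fun ξ => max (-(deriv f ξ)) 0)
    (hfc.neg.max continuous_const) (fun ξ => le_max_right _ _) hLN hv hwC
  rw [hrep u v]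
  exact ⟨by linarith [hA.1, hB.2], by linarith [hA.2, hB.1]⟩


end
end
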